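/- arXiv:2202.08786 — 3 statements merged into one kernel-verified Lean document; each statement's English description precedes it below -/
import Mathlib

section
/- Let Θ = [−a,a]^d × Ω be the parameter space of the location-scale Gaussian family, let k ≥ k0 ≥ 1, let G0 ∈ E_{k0}(Θ), and set r̄ = r̄(k − k0 + 1) (with r̄ = 1 if k = k0). Then there exists a constant c > 0, depending only on G0, k, d and the diameter of Θ, such that for all G ∈ O_k(Θ): D̄(G, G0) ≥ c · W_{r̄}^{r̄}(G, G0), where the Wasserstein distance is taken with respect to the ground metric D((μ,Σ),(μ',Σ')) = ‖μ − μ'‖ + ‖Σ − Σ'‖ on Θ. -/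
/-!
Send each atom of `G` to a nearest atom of `G0`, as far as the weights of `G0` allow, and the rest
anywhere: `W_r^r(G, G0)` is at most `∑ᵢ pᵢ D(θᵢ, θ⁰_{σ i})^r` plus `diam(Θ)^r` times the mass
mismatch. On the bounded set `Θ`, `D^r` is dominated by the costs of `𝒟̄` as soon as
`r̄(|Aⱼ|) ≤ r`, which holds when no cell has more than `k - k0 + 1` atoms since `r̄` is monotone.
The mismatch differs from the mass term of `𝒟̄` only by atoms lying in two cells; these are at
distance at least half the separation of `G0` from every atom of `G0`, so the costs of `𝒟̄` pay for
them. If some cell has more than `k - k0 + 1` atoms, some other cell consists of such tied atoms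
only, which bounds `𝒟̄` from below while `W_r^r ≤ diam(Θ)^r`.

That `r̄` is finite, so that `r ≥ 1`, is a statement about the power series `exp (a t + b t²)`:
a combination of `m` of them with distinct `(a, b)` and polynomial coefficients of degree `≤ D`
cannot vanish to order `(2 ^ m - 1) (D + 1)` at `t = 0`.
-/

open MeasureTheory

attribute [local instance] Classical.propDecidable

/-- A finite mixing measure: positive weights `p` summing to one over distinct atoms. -/
structure MixingMeasure (E : Type*) where
  order : ℕ
  p : Fin order → ℝ
  atom : Fin order → E
  p_pos : ∀ i, 0 < p i
  p_sum : ∑ i, p i = 1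
  atom_inj : Function.Injective atom

namespace MixingMeasure

/-- `G ∈ O_k(Θ)`: mixing measures of order at most `k` supported in `Θ`. -/
def memO {E : Type*} (G : MixingMeasure E) (k : ℕ) (Θ : Set E) : Prop :=
  G.order ≤ k ∧ ∀ i, G.atom i ∈ Θ

/-- `G ∈ E_k(Θ)`: mixing measures of order exactly `k` supported in `Θ`. -/
def memE {E : Type*} (G : MixingMeasure E) (k : ℕ) (Θ : Set E) : Prop :=
  G.order = k ∧ ∀ i, G.atom i ∈ Θ

/-- `G ∈ O_{k,c0}(Θ)`: order at most `k`, support in `Θ`, weights at least `c0`. -/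
def memOc {E : Type*} (G : MixingMeasure E) (k : ℕ) (c0 : ℝ) (Θ : Set E) : Prop :=
  G.memO k Θ ∧ ∀ i, c0 ≤ G.p i

/-- Two mixing measures represent the same measure (equal up to relabelling). -/
def MixEq {E : Type*} (G G' : MixingMeasure E) : Prop :=
  ∃ e : Fin G.order ≃ Fin G'.order, ∀ i, G'.atom (e i) = G.atom i ∧ G'.p (e i) = G.p i

end MixingMeasure

/-- The mixture density `p_G`. -/
noncomputable def mixDensity {E X : Type*} (f : E → X → ℝ) (G : MixingMeasure E) (x : X) : ℝ :=
  ∑ i, G.p i * f (G.atom i) x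

/-- The distribution of an i.i.d. sample of size `n` from the density `g` w.r.t. `ν`. -/
noncomputable def sampleMeasure {X : Type*} [MeasurableSpace X] (ν : Measure X) (g : X → ℝ)
    (n : ℕ) : Measure (Fin n → X) :=
  Measure.pi fun _ => ν.withDensity fun x => ENNReal.ofReal (g x)

/-- The log-likelihood `ℓ_n(G)` of the sample `xs`. -/
noncomputable def logLik {E X : Type*} (f : E → X → ℝ) {n : ℕ} (xs : Fin n → X)
    (G : MixingMeasure E) : ℝ :=
  ∑ i, Real.log (mixDensity f G (xs i))

/-- The penalty `ρ(G) = Σ_j log p_j`. -/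
noncomputable def penalty {E : Type*} (G : MixingMeasure E) : ℝ :=
  ∑ i, Real.log (G.p i)

/-- Voronoi cell `A_j(G)` generated by the atoms of `G0`, with respect to the
ground distance `D`. -/
noncomputable def voronoiD {E : Type*} (D : E → E → ℝ) (G G0 : MixingMeasure E)
    (j : Fin G0.order) : Finset (Fin G.order) :=
  Finset.univ.filter fun i => ∀ l, D (G.atom i) (G0.atom j) ≤ D (G.atom i) (G0.atom l)

/-- The set of couplings between the weights of two mixing measures. -/
def couplings {E : Type*} (G G' : MixingMeasure E) : Set (Fin G.order → Fin G'.order → ℝ) :=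
  {q | (∀ i j, 0 ≤ q i j) ∧ (∀ i, ∑ j, q i j = G.p i) ∧ (∀ j, ∑ i, q i j = G'.p j)}

/-- The `r`-th power `W_r^r` of the order-`r` Wasserstein distance between mixing
measures, with ground distance `D`. -/
noncomputable def wassersteinPow {E : Type*} (D : E → E → ℝ) (r : ℕ)
    (G G' : MixingMeasure E) : ℝ :=
  sInf {c | ∃ q ∈ couplings G G', c = ∑ i, ∑ j, q i j * D (G.atom i) (G'.atom j) ^ r}

/-- The parameter of a location-scale Gaussian: a mean vector and a covariance matrix. -/
abbrev GaussParam (d : ℕ) := (Fin d → ℝ) × Matrix (Fin d) (Fin d) ℝ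

/-- Euclidean norm of a vector. -/
noncomputable def vecNorm {d : ℕ} (v : Fin d → ℝ) : ℝ := Real.sqrt (∑ i, v i ^ 2)

/-- Frobenius norm of a matrix. -/
noncomputable def matNorm {d : ℕ} (M : Matrix (Fin d) (Fin d) ℝ) : ℝ :=
  Real.sqrt (∑ i, ∑ j, M i j ^ 2)

/-- The ground metric `D((μ,Σ), (μ',Σ')) = ‖μ - μ'‖ + ‖Σ - Σ'‖` on `GaussParam d`. -/
noncomputable def gDist {d : ℕ} (θ θ' : GaussParam d) : ℝ :=
  vecNorm (θ.1 - θ'.1) + matNorm (θ.2 - θ'.2)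

/-- The `d`-dimensional Gaussian density with mean `θ.1` and covariance `θ.2`. -/
noncomputable def gaussDensity {d : ℕ} (θ : GaussParam d) (x : Fin d → ℝ) : ℝ :=
  (Real.sqrt ((2 * Real.pi) ^ d * θ.2.det))⁻¹ *
    Real.exp (-dotProduct (x - θ.1) (θ.2⁻¹.mulVec (x - θ.1)) / 2)

/-- The system of polynomial equations (8) admits a nontrivial solution: all `c_j` are
nonzero and at least one `a_j` is nonzero. -/
def hasNontrivialSol (k' r : ℕ) : Prop :=
  ∃ a b c : Fin k' → ℝ, (∀ j, c j ≠ 0) ∧ (∃ j, a j ≠ 0) ∧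
    ∀ α ∈ Finset.Icc 1 r,
      ∑ j, ∑ nn ∈ (Finset.range (α + 1) ×ˢ Finset.range (α + 1)).filter
          (fun nn : ℕ × ℕ => nn.1 + 2 * nn.2 = α),
        c j ^ 2 * a j ^ nn.1 * b j ^ nn.2 / (nn.1.factorial * nn.2.factorial : ℝ) = 0

/-- `r̄(k')`: the smallest integer `r ≥ 1` such that the system (8) has no nontrivial
solution. -/
noncomputable def rbar (k' : ℕ) : ℕ := sInf {r : ℕ | 1 ≤ r ∧ ¬hasNontrivialSol k' r}

/-- The loss function `𝒟̄(G, G0)` for location-scale Gaussian mixtures. -/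
noncomputable def lossDbar {d : ℕ} (G G0 : MixingMeasure (GaussParam d)) : ℝ :=
  (∑ j, if (voronoiD gDist G G0 j).card = 1
      then ∑ i ∈ voronoiD gDist G G0 j, G.p i *
        (vecNorm ((G.atom i).1 - (G0.atom j).1) + matNorm ((G.atom i).2 - (G0.atom j).2))
      else if 1 < (voronoiD gDist G G0 j).card
      then ∑ i ∈ voronoiD gDist G G0 j, G.p i *
        (vecNorm ((G.atom i).1 - (G0.atom j).1) ^ (rbar (voronoiD gDist G G0 j).card : ℝ)
          + matNorm ((G.atom i).2 - (G0.atom j).2) ^ ((rbar (voronoiD gDist G G0 j).card : ℝ) / 2))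
      else 0)
  + ∑ j, |(∑ i ∈ voronoiD gDist G G0 j, G.p i) - G0.p j|

/-- The parameter space `Θ = [-a,a]^d × Ω` of the location-scale Gaussian family. -/
def gaussTheta {d : ℕ} (a : ℝ) (Ω : Set (Matrix (Fin d) (Fin d) ℝ)) : Set (GaussParam d) :=
  {θ | (∀ i, θ.1 i ∈ Set.Icc (-a) a) ∧ θ.2 ∈ Ω}

/-- `Ω` is a compact set of symmetric matrices whose eigenvalues lie in a closed
interval contained in `(0, ∞)`. -/
def goodScaleSet {d : ℕ} (Ω : Set (Matrix (Fin d) (Fin d) ℝ)) : Prop :=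
  IsCompact Ω ∧ ∃ lo hi : ℝ, 0 < lo ∧ lo ≤ hi ∧
    ∀ M ∈ Ω, M.IsSymm ∧ ∀ v : Fin d → ℝ,
      lo * dotProduct v v ≤ dotProduct v (M.mulVec v) ∧
      dotProduct v (M.mulVec v) ≤ hi * dotProduct v v

noncomputable section

section ExpQuad

open PowerSeries

/-- The `n`-th Taylor coefficient of `exp (a t + b t ^ 2)`. -/
def expQuadCoeff (a b : ℝ) (n : ℕ) : ℝ :=
  ∑ nn ∈ (Finset.range (n + 1) ×ˢ Finset.range (n + 1)).filter
      (fun nn : ℕ × ℕ => nn.1 + 2 * nn.2 = n),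
    a ^ nn.1 * b ^ nn.2 / (nn.1.factorial * nn.2.factorial : ℝ)

def expQuad (a b : ℝ) : ℝ⟦X⟧ := PowerSeries.mk (expQuadCoeff a b)

lemma expQuadCoeff_zero (a b : ℝ) : expQuadCoeff a b 0 = 1 := by
  have : (Finset.range 1 ×ˢ Finset.range 1).filter
      (fun nn : ℕ × ℕ => nn.1 + 2 * nn.2 = 0) = {(0, 0)} := by decide
  rw [expQuadCoeff, this]
  simp

lemma expQuadCoeff_one (a b : ℝ) : expQuadCoeff a b 1 = a := by
  have : (Finset.range 2 ×ˢ Finset.range 2).filter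
      (fun nn : ℕ × ℕ => nn.1 + 2 * nn.2 = 1) = {(1, 0)} := by decide
  rw [expQuadCoeff, this]
  simp

lemma expQuadCoeff_zero_zero {n : ℕ} (hn : n ≠ 0) : expQuadCoeff 0 0 n = 0 := by
  refine Finset.sum_eq_zero fun nn hnn => ?_
  have : nn.1 ≠ 0 ∨ nn.2 ≠ 0 := by
    rw [Finset.mem_filter] at hnn
    omega
  rcases this with h | h <;> simp [zero_pow h]

lemma expQuad_zero_zero : expQuad 0 0 = 1 := by
  ext n
  rcases eq_or_ne n 0 with rfl | hn
  · simp [expQuad, expQuadCoeff_zero]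
  · simp [expQuad, expQuadCoeff_zero_zero hn, coeff_one, hn]

lemma isUnit_expQuad (a b : ℝ) : IsUnit (expQuad a b) := by
  simp [isUnit_iff_constantCoeff, expQuad, ← coeff_zero_eq_constantCoeff_apply,
    expQuadCoeff_zero]

lemma expQuadCoeff_succ_succ (a b : ℝ) (n : ℕ) :
    (n + 2 : ℝ) * expQuadCoeff a b (n + 2) =
      a * expQuadCoeff a b (n + 1) + 2 * b * expQuadCoeff a b n := by
  set T : ℕ × ℕ → ℝ := fun nn => a ^ nn.1 * b ^ nn.2 / (nn.1.factorial * nn.2.factorial : ℝ)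
  set S : ℕ → Finset (ℕ × ℕ) := fun n =>
    (Finset.range (n + 1) ×ˢ Finset.range (n + 1)).filter (fun nn => nn.1 + 2 * nn.2 = n)
  have hT1 : ∀ x y, ((x + 1 : ℕ) : ℝ) * T (x + 1, y) = a * T (x, y) := by
    intro x y
    simp only [T, Nat.factorial_succ, pow_succ]
    push_cast
    field_simp
  have hT2 : ∀ x y, ((2 * (y + 1) : ℕ) : ℝ) * T (x, y + 1) = 2 * b * T (x, y) := by
    intro x y
    simp only [T, Nat.factorial_succ, pow_succ]
    push_cast
    field_simp
  have hsplit : (n + 2 : ℝ) * expQuadCoeff a b (n + 2) =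
      (∑ nn ∈ S (n + 2), (nn.1 : ℝ) * T nn) + ∑ nn ∈ S (n + 2), ((2 * nn.2 : ℕ) : ℝ) * T nn := by
    rw [expQuadCoeff, Finset.mul_sum, ← Finset.sum_add_distrib]
    refine Finset.sum_congr rfl fun nn hnn => ?_
    have : (n + 2 : ℝ) = nn.1 + ((2 * nn.2 : ℕ) : ℝ) := by
      exact_mod_cast (Finset.mem_filter.mp hnn).2.symm
    rw [this, add_mul]
  have hfst : ∑ nn ∈ S (n + 2), (nn.1 : ℝ) * T nn = a * expQuadCoeff a b (n + 1) := by
    rw [expQuadCoeff, Finset.mul_sum, ← Finset.sum_filter_of_ne (p := fun nn => nn.1 ≠ 0)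
      (fun nn _ h h0 => by simp [h0] at h)]
    refine Finset.sum_nbij' (fun nn => (nn.1 - 1, nn.2)) (fun nn => (nn.1 + 1, nn.2))
      ?_ ?_ ?_ ?_ ?_ <;> intro ⟨x, y⟩ hxy <;> simp only [S, Finset.mem_filter,
        Finset.mem_product, Finset.mem_range] at hxy ⊢
    · omega
    · omega
    · exact Prod.ext (by omega) rfl
    · simp
    · obtain ⟨x, rfl⟩ : ∃ x', x = x' + 1 := ⟨x - 1, by omega⟩
      simpa using hT1 x y
  have hsnd : ∑ nn ∈ S (n + 2), ((2 * nn.2 : ℕ) : ℝ) * T nn = 2 * b * expQuadCoeff a b n := by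
    rw [expQuadCoeff, Finset.mul_sum, ← Finset.sum_filter_of_ne (p := fun nn => nn.2 ≠ 0)
      (fun nn _ h h0 => by simp [h0] at h)]
    refine Finset.sum_nbij' (fun nn => (nn.1, nn.2 - 1)) (fun nn => (nn.1, nn.2 + 1))
      ?_ ?_ ?_ ?_ ?_ <;> intro ⟨x, y⟩ hxy <;> simp only [S, Finset.mem_filter,
        Finset.mem_product, Finset.mem_range] at hxy ⊢
    · omega
    · omega
    · exact Prod.ext rfl (by omega)
    · simp
    · obtain ⟨y, rfl⟩ : ∃ y', y = y' + 1 := ⟨y - 1, by omega⟩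
      simpa using hT2 x y
  rw [hsplit, hfst, hsnd]

lemma derivative_expQuad (a b : ℝ) :
    d⁄dX ℝ (expQuad a b) = (C a + C (2 * b) * X) * expQuad a b := by
  ext n
  rw [coeff_derivative, add_mul, map_add, coeff_C_mul, mul_assoc, coeff_C_mul]
  rcases n with _ | n
  · simp [expQuad, expQuadCoeff_one, expQuadCoeff_zero]
  · simp only [expQuad, coeff_mk, coeff_succ_X_mul]
    push_cast
    linear_combination expQuadCoeff_succ_succ a b n

def twistDeriv (α β : ℝ) : Module.End ℝ (Polynomial ℝ) :=
  Polynomial.derivative + LinearMap.mulLeft ℝ (Polynomial.C α + Polynomial.C (2 * β) * Polynomial.X)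

/-- Annihilates `expQuad c e`. -/
def expQuadOp (c e : ℝ) : Module.End ℝ ℝ⟦X⟧ :=
  (d⁄dX ℝ : ℝ⟦X⟧ →ₗ[ℝ] ℝ⟦X⟧) - LinearMap.mulLeft ℝ (C c + C (2 * e) * X)

lemma twistDeriv_zero_zero : twistDeriv 0 0 = Polynomial.derivative := by
  ext P : 1
  simp [twistDeriv]

lemma natDegree_twistDeriv_le (α β : ℝ) (P : Polynomial ℝ) :
    (twistDeriv α β P).natDegree ≤ P.natDegree + 1 := by
  simp only [twistDeriv, LinearMap.add_apply, LinearMap.mulLeft_apply, add_mul]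
  refine Polynomial.natDegree_add_le_of_degree_le
    ((Polynomial.natDegree_derivative_le P).trans (by omega))
    (Polynomial.natDegree_add_le_of_degree_le
      ((Polynomial.natDegree_C_mul_le _ _).trans (by omega)) ?_)
  rw [mul_assoc]
  exact (Polynomial.natDegree_C_mul_le _ _).trans (Polynomial.natDegree_mul_le.trans
    (by have := Polynomial.natDegree_X_le (R := ℝ); omega))

lemma twistDeriv_ne_zero {α β : ℝ} (hαβ : (α, β) ≠ 0) {P : Polynomial ℝ} (hP : P ≠ 0) :
    twistDeriv α β P ≠ 0 := by
  intro h0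
  have hlc : P.coeff P.natDegree ≠ 0 := Polynomial.leadingCoeff_ne_zero.mpr hP
  have hcoeff : ∀ n, (twistDeriv α β P).coeff (n + 1) =
      P.coeff (n + 2) * (n + 2) + α * P.coeff (n + 1) + 2 * β * P.coeff n := by
    intro n
    simp only [twistDeriv, LinearMap.add_apply, LinearMap.mulLeft_apply, add_mul,
      Polynomial.coeff_add, Polynomial.coeff_derivative, Polynomial.coeff_C_mul, mul_assoc,
      Polynomial.coeff_X_mul]
    push_cast
    ring
  by_cases hβ : β = 0
  · have hα : α ≠ 0 := fun hα => hαβ (by simp [hα, hβ])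
    have h := congrArg (Polynomial.coeff · P.natDegree) h0
    simp only [twistDeriv, hβ, LinearMap.add_apply, LinearMap.mulLeft_apply, mul_zero,
      map_zero, zero_mul, add_zero, Polynomial.coeff_add, Polynomial.coeff_derivative,
      Polynomial.coeff_C_mul, Polynomial.coeff_zero,
      Polynomial.coeff_eq_zero_of_natDegree_lt (Nat.lt_succ_self _), zero_mul, zero_add] at h
    exact mul_ne_zero hα hlc h
  · have h := congrArg (Polynomial.coeff · (P.natDegree + 1)) h0
    simp only [hcoeff, Polynomial.coeff_zero,
      Polynomial.coeff_eq_zero_of_natDegree_lt (by omega : P.natDegree < P.natDegree + 2),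
      Polynomial.coeff_eq_zero_of_natDegree_lt (Nat.lt_succ_self _), zero_mul, mul_zero,
      zero_add] at h
    exact mul_ne_zero (mul_ne_zero two_ne_zero hβ) hlc h

lemma expQuadOp_coe_mul_expQuad (c e a b : ℝ) (P : Polynomial ℝ) :
    expQuadOp c e (P * expQuad a b) = (twistDeriv (a - c) (b - e) P : ℝ⟦X⟧) * expQuad a b := by
  simp only [expQuadOp, twistDeriv, LinearMap.sub_apply, LinearMap.add_apply,
    LinearMap.mulLeft_apply, Derivation.coeFn_coe, Derivation.leibniz,
    smul_eq_mul, derivative_coe, derivative_expQuad, Polynomial.coe_add, Polynomial.coe_mul,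
    Polynomial.coe_C, Polynomial.coe_X, Polynomial.coe_sub, map_sub, map_mul]
  ring

lemma pow_expQuadOp_coe_mul_expQuad (c e a b : ℝ) (s : ℕ) (P : Polynomial ℝ) :
    (expQuadOp c e ^ s) (P * expQuad a b) =
      ((twistDeriv (a - c) (b - e) ^ s) P : ℝ⟦X⟧) * expQuad a b := by
  induction s with
  | zero => simp
  | succ s ih => rw [pow_succ', Module.End.mul_apply, ih, expQuadOp_coe_mul_expQuad,
      pow_succ', Module.End.mul_apply]

lemma X_pow_dvd_expQuadOp {n : ℕ} {f : ℝ⟦X⟧} (c e : ℝ) (hf : X ^ (n + 1) ∣ f) :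
    X ^ n ∣ expQuadOp c e f := by
  obtain ⟨g, rfl⟩ := hf
  have hX : X ^ n ∣ (X : ℝ⟦X⟧) ^ (n + 1) := pow_dvd_pow X n.le_succ
  simp only [expQuadOp, LinearMap.sub_apply, LinearMap.mulLeft_apply,
    Derivation.coeFn_coe, Derivation.leibniz, smul_eq_mul, derivative_pow, derivative_X,
    Nat.add_sub_cancel, mul_one]
  exact dvd_sub (dvd_add (hX.mul_right _) ((Dvd.intro_left _ rfl).mul_left _))
    ((hX.mul_right _).mul_left _)

lemma X_pow_dvd_pow_expQuadOp {n s : ℕ} {f : ℝ⟦X⟧} (c e : ℝ) (hf : X ^ (n + s) ∣ f) :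
    X ^ n ∣ (expQuadOp c e ^ s) f := by
  induction s generalizing n f with
  | zero => simpa using hf
  | succ s ih =>
    rw [pow_succ, Module.End.mul_apply]
    exact ih (X_pow_dvd_expQuadOp c e hf)

lemma natDegree_pow_twistDeriv_le (α β : ℝ) (s : ℕ) (P : Polynomial ℝ) :
    ((twistDeriv α β ^ s) P).natDegree ≤ P.natDegree + s := by
  induction s with
  | zero => simp
  | succ s ih =>
    rw [pow_succ', Module.End.mul_apply]
    exact (natDegree_twistDeriv_le α β _).trans (by omega)

lemma pow_twistDeriv_ne_zero {α β : ℝ} (hαβ : (α, β) ≠ 0) (s : ℕ) {P : Polynomial ℝ}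
    (hP : P ≠ 0) : (twistDeriv α β ^ s) P ≠ 0 := by
  induction s with
  | zero => simpa using hP
  | succ s ih =>
    rw [pow_succ', Module.End.mul_apply]
    exact twistDeriv_ne_zero hαβ ih

lemma eq_zero_of_X_pow_dvd_coe {P : Polynomial ℝ} {n : ℕ} (hP : P.natDegree < n)
    (h : X ^ n ∣ (P : ℝ⟦X⟧)) : P = 0 := by
  ext m
  rw [Polynomial.coeff_zero]
  rcases lt_or_ge m n with hm | hm
  · rw [← Polynomial.coeff_coe]
    exact X_pow_dvd_iff.mp h m hm
  · exact Polynomial.coeff_eq_zero_of_natDegree_lt (by omega)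

/-- Applying `D + 1` times the operator that kills the term of `g₀` removes that term and raises
the other degrees by at most `D + 1`, which reduces to `T \ {g₀}`. -/
theorem eq_zero_of_X_pow_dvd_sum_mul_expQuad (T : Finset (ℝ × ℝ)) (D : ℕ)
    (P : ℝ × ℝ → Polynomial ℝ) (hD : ∀ g ∈ T, (P g).natDegree ≤ D)
    (hdvd : X ^ ((2 ^ T.card - 1) * (D + 1)) ∣ ∑ g ∈ T, (P g : ℝ⟦X⟧) * expQuad g.1 g.2) :
    ∀ g ∈ T, P g = 0 := by
  induction T using Finset.induction_on generalizing D P with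
  | empty => simp
  | insert g₀ T hg₀ ih =>
    rw [Finset.sum_insert hg₀, Finset.card_insert_of_notMem hg₀] at hdvd
    set Q : ℝ × ℝ → Polynomial ℝ :=
      fun g => (twistDeriv (g.1 - g₀.1) (g.2 - g₀.2) ^ (D + 1)) (P g)
    have hkill : (expQuadOp g₀.1 g₀.2 ^ (D + 1)) ((P g₀ : ℝ⟦X⟧) * expQuad g₀.1 g₀.2) = 0 := by
      rw [pow_expQuadOp_coe_mul_expQuad, sub_self, sub_self, twistDeriv_zero_zero,
        Module.End.pow_apply, Polynomial.iterate_derivative_eq_zero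
          (Nat.lt_succ_of_le (hD g₀ (Finset.mem_insert_self _ _))),
        Polynomial.coe_zero, zero_mul]
    have hexp :
        (2 ^ (T.card + 1) - 1) * (D + 1) = (2 ^ T.card - 1) * (2 * D + 1 + 1) + (D + 1) := by
      obtain ⟨q, hq⟩ : ∃ q, 2 ^ T.card = q + 1 := ⟨2 ^ T.card - 1, by
        have := Nat.one_le_two_pow (n := T.card); omega⟩
      rw [pow_succ, hq, show (q + 1) * 2 - 1 = 2 * q + 1 by omega, Nat.add_sub_cancel]
      ring
    have hQ : ∀ g ∈ T, Q g = 0 := by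
      refine ih (2 * D + 1) Q (fun g hg => ?_) ?_
      · have := hD g (Finset.mem_insert_of_mem hg)
        exact (natDegree_pow_twistDeriv_le _ _ _ _).trans (by omega)
      · have := X_pow_dvd_pow_expQuadOp g₀.1 g₀.2 (hexp ▸ hdvd)
        simpa only [map_add, map_sum, hkill, zero_add, pow_expQuadOp_coe_mul_expQuad] using this
    have hPT : ∀ g ∈ T, P g = 0 := by
      intro g hg
      by_contra hPg
      refine pow_twistDeriv_ne_zero ?_ (D + 1) hPg (hQ g hg)
      intro h
      have : g = g₀ := by simpa [Prod.ext_iff, sub_eq_zero] using h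
      exact hg₀ (this ▸ hg)
    have hPg₀ : P g₀ = 0 := by
      rw [Finset.sum_eq_zero fun g hg => by rw [hPT g hg, Polynomial.coe_zero, zero_mul],
        add_zero] at hdvd
      refine eq_zero_of_X_pow_dvd_coe (Nat.lt_succ_of_le (hD g₀ (Finset.mem_insert_self _ _))) ?_
      refine (isUnit_expQuad g₀.1 g₀.2).dvd_mul_right.mp ((pow_dvd_pow X ?_).trans hdvd)
      rw [hexp]
      exact Nat.le_add_left _ _
    exact Finset.forall_mem_insert _ _ _ |>.mpr ⟨hPg₀, hPT⟩

lemma hasNontrivialSol_iff (k' r : ℕ) :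
    hasNontrivialSol k' r ↔ ∃ a b c : Fin k' → ℝ, (∀ j, c j ≠ 0) ∧ (∃ j, a j ≠ 0) ∧
      ∀ α ∈ Finset.Icc 1 r, ∑ j, c j ^ 2 * expQuadCoeff (a j) (b j) α = 0 := by
  have hsum : ∀ (a b c : Fin k' → ℝ) (α : ℕ),
      ∑ j, ∑ nn ∈ (Finset.range (α + 1) ×ˢ Finset.range (α + 1)).filter
          (fun nn : ℕ × ℕ => nn.1 + 2 * nn.2 = α),
        c j ^ 2 * a j ^ nn.1 * b j ^ nn.2 / (nn.1.factorial * nn.2.factorial : ℝ) =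
      ∑ j, c j ^ 2 * expQuadCoeff (a j) (b j) α := by
    intro a b c α
    simp only [expQuadCoeff, Finset.mul_sum, mul_div_assoc, mul_assoc]
  simp only [hasNontrivialSol, hsum]

/-- The system has no nontrivial solution with `r = 2 ^ (k' + 1)`: otherwise
`∑ c_j² exp (a_j t + b_j t²) - ∑ c_j²` would vanish to order `2 ^ (k' + 1)` at `t = 0` while,
regrouped over the at most `k' + 1` distinct exponents, its coefficient at `(0, 0)` is
`-∑_{a_j ≠ 0 ∨ b_j ≠ 0} c_j² < 0`. -/
theorem not_hasNontrivialSol (k' : ℕ) : ¬ hasNontrivialSol k' (2 ^ (k' + 1)) := by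
  rw [hasNontrivialSol_iff]
  rintro ⟨a, b, c, hc, ⟨j₀, hj₀⟩, hsys⟩
  set pr : Fin k' → ℝ × ℝ := fun j => (a j, b j)
  set T : Finset (ℝ × ℝ) := insert 0 (Finset.univ.image pr)
  set S := ∑ j, c j ^ 2
  set w : ℝ × ℝ → ℝ := fun g => (∑ j ∈ Finset.univ.filter (pr · = g), c j ^ 2) -
    if g = 0 then S else 0
  have hcomb : ∑ g ∈ T, (Polynomial.C (w g) : ℝ⟦X⟧) * expQuad g.1 g.2 =
      ∑ j, C (c j ^ 2) * expQuad (a j) (b j) - C S := by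
    have hfib : ∑ g ∈ T, C (∑ j ∈ Finset.univ.filter (pr · = g), c j ^ 2) * expQuad g.1 g.2 =
        ∑ j, C (c j ^ 2) * expQuad (a j) (b j) := by
      rw [← Finset.sum_fiberwise_of_maps_to (g := pr) (t := T)
        (fun j _ => Finset.mem_insert_of_mem (Finset.mem_image_of_mem pr (Finset.mem_univ j)))]
      refine Finset.sum_congr rfl fun g _ => ?_
      rw [map_sum, Finset.sum_mul]
      exact Finset.sum_congr rfl fun j hj => by rw [← (Finset.mem_filter.mp hj).2]
    simp only [Polynomial.coe_C]
    simp only [w, map_sub, sub_mul, Finset.sum_sub_distrib, hfib,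
      apply_ite C, ite_mul, map_zero, zero_mul, Finset.sum_ite_eq', Prod.fst_zero, Prod.snd_zero,
      expQuad_zero_zero, mul_one]
    rw [if_pos (Finset.mem_insert_self _ _)]
  have hdvd : X ^ ((2 ^ T.card - 1) * (0 + 1)) ∣
      ∑ g ∈ T, (Polynomial.C (w g) : ℝ⟦X⟧) * expQuad g.1 g.2 := by
    have hcard : T.card ≤ k' + 1 :=
      (Finset.card_insert_le _ _).trans (by simpa using Finset.card_image_le.trans (by simp))
    refine (pow_dvd_pow X ?_).trans ((X_pow_dvd_iff (n := 2 ^ (k' + 1) + 1)).mpr fun n hn => ?_)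
    · rw [zero_add, mul_one]
      exact (Nat.sub_le _ _).trans ((Nat.pow_le_pow_right two_pos hcard).trans (Nat.le_succ _))
    · rw [hcomb, map_sub, map_sum]
      simp only [coeff_C_mul, expQuad, coeff_mk, coeff_C]
      rcases eq_or_ne n 0 with rfl | hn₀
      · simp [expQuadCoeff_zero, S]
      · rw [if_neg hn₀, sub_zero]
        exact hsys n (Finset.mem_Icc.mpr ⟨Nat.one_le_iff_ne_zero.mpr hn₀, Nat.lt_succ_iff.mp hn⟩)
  have hw₀ : w 0 = 0 := by
    simpa using eq_zero_of_X_pow_dvd_sum_mul_expQuad T 0 (fun g => Polynomial.C (w g))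
      (fun g _ => by simp) hdvd 0 (Finset.mem_insert_self _ _)
  have hlt : ∑ j ∈ Finset.univ.filter (pr · = 0), c j ^ 2 < S :=
    Finset.sum_lt_sum_of_subset (Finset.filter_subset _ _) (Finset.mem_univ j₀)
      (by simp [pr, hj₀]) (pow_two_pos_of_ne_zero (hc j₀)) (fun j _ _ => sq_nonneg _)
  simp only [w, if_true] at hw₀
  linarith

lemma hasNontrivialSol.mono {k₁ k₂ r : ℕ} (h : hasNontrivialSol k₁ r) (hk : k₁ ≤ k₂) :
    hasNontrivialSol k₂ r := by
  obtain ⟨m, rfl⟩ := Nat.exists_eq_add_of_le hk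
  rw [hasNontrivialSol_iff] at h ⊢
  obtain ⟨a, b, c, hc, ⟨j₀, hj₀⟩, hsys⟩ := h
  refine ⟨Fin.append a 0, Fin.append b 0, Fin.append c 1, fun j => ?_,
    ⟨Fin.castAdd m j₀, by simpa using hj₀⟩, fun α hα => ?_⟩
  · refine Fin.addCases (fun j => ?_) (fun j => ?_) j <;> simp [hc]
  · have hα₀ : α ≠ 0 := by have := (Finset.mem_Icc.mp hα).1; omega
    simp [Fin.sum_univ_add, hsys α hα, expQuadCoeff_zero_zero hα₀]

lemma nonempty_rbar_set (k' : ℕ) : {r : ℕ | 1 ≤ r ∧ ¬hasNontrivialSol k' r}.Nonempty :=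
  ⟨2 ^ (k' + 1), Nat.one_le_two_pow, not_hasNontrivialSol k'⟩

lemma one_le_rbar (k' : ℕ) : 1 ≤ rbar k' := (Nat.sInf_mem (nonempty_rbar_set k')).1

lemma rbar_mono : Monotone rbar := fun _ _ hk =>
  Nat.sInf_le ⟨one_le_rbar _, fun h => (Nat.sInf_mem (nonempty_rbar_set _)).2 (h.mono hk)⟩

end ExpQuad

section Wasserstein

variable {E : Type*}

lemma MixingMeasure.order_pos (G : MixingMeasure E) : 0 < G.order := by
  obtain ⟨_ | n, p, atom, -, hp, -⟩ := G
  · simp at hp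
  · exact n.succ_pos

lemma MixingMeasure.exists_pos_le_p (G : MixingMeasure E) : ∃ p₀ > 0, ∀ i, p₀ ≤ G.p i := by
  obtain ⟨i, -, hi⟩ := Finset.exists_min_image Finset.univ G.p
    ⟨⟨0, G.order_pos⟩, Finset.mem_univ _⟩
  exact ⟨G.p i, G.p_pos i, fun l => hi l (Finset.mem_univ l)⟩

variable (D : E → E → ℝ) (r : ℕ) (G G' : MixingMeasure E)

lemma prod_mem_couplings : (fun i j => G.p i * G'.p j) ∈ couplings G G' :=
  ⟨fun i j => mul_nonneg (G.p_pos i).le (G'.p_pos j).le,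
    fun i => by rw [← Finset.mul_sum, G'.p_sum, mul_one],
    fun j => by rw [← Finset.sum_mul, G.p_sum, one_mul]⟩

variable {D r G G'}

lemma wassersteinPow_nonneg (hD : ∀ i j, 0 ≤ D (G.atom i) (G'.atom j)) :
    0 ≤ wassersteinPow D r G G' := by
  refine le_csInf ⟨_, _, prod_mem_couplings G G', rfl⟩ ?_
  rintro _ ⟨q, ⟨hq, -, -⟩, rfl⟩
  exact Finset.sum_nonneg fun i _ => Finset.sum_nonneg fun j _ =>
    mul_nonneg (hq i j) (pow_nonneg (hD i j) r)

lemma wassersteinPow_le_cost (hD : ∀ i j, 0 ≤ D (G.atom i) (G'.atom j))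
    {q : Fin G.order → Fin G'.order → ℝ} (hq : q ∈ couplings G G') :
    wassersteinPow D r G G' ≤ ∑ i, ∑ j, q i j * D (G.atom i) (G'.atom j) ^ r := by
  refine csInf_le ⟨0, ?_⟩ ⟨q, hq, rfl⟩
  rintro _ ⟨q', ⟨hq', -, -⟩, rfl⟩
  exact Finset.sum_nonneg fun i _ => Finset.sum_nonneg fun j _ =>
    mul_nonneg (hq' i j) (pow_nonneg (hD i j) r)

/-- The sub-coupling `q₀` is completed to a coupling by adding the product of the missing row and
column masses, divided by the missing total mass. -/
lemma wassersteinPow_le_of_subcoupling {B : ℝ} (hD : ∀ i j, 0 ≤ D (G.atom i) (G'.atom j))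
    (hDB : ∀ i j, D (G.atom i) (G'.atom j) ≤ B) (q₀ : Fin G.order → Fin G'.order → ℝ)
    (hq₀ : ∀ i j, 0 ≤ q₀ i j) (hrow : ∀ i, ∑ j, q₀ i j ≤ G.p i)
    (hcol : ∀ j, ∑ i, q₀ i j ≤ G'.p j) :
    wassersteinPow D r G G' ≤
      ∑ i, ∑ j, q₀ i j * D (G.atom i) (G'.atom j) ^ r + B ^ r * (1 - ∑ i, ∑ j, q₀ i j) := by
  set e : Fin G.order → ℝ := fun i => G.p i - ∑ j, q₀ i j
  set f : Fin G'.order → ℝ := fun j => G'.p j - ∑ i, q₀ i j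
  set T := 1 - ∑ i, ∑ j, q₀ i j
  have he : ∀ i, 0 ≤ e i := fun i => sub_nonneg.mpr (hrow i)
  have hf : ∀ j, 0 ≤ f j := fun j => sub_nonneg.mpr (hcol j)
  have hsum_e : ∑ i, e i = T := by simp only [e, T, Finset.sum_sub_distrib, G.p_sum]
  have hsum_f : ∑ j, f j = T := by
    simp only [f, T, Finset.sum_sub_distrib, G'.p_sum, Finset.sum_comm (f := fun i j => q₀ i j)]
  -- `T` may vanish, but then so does every `e i` and `f j`.
  have hcancel : ∀ x, 0 ≤ x → x ≤ T → x * T / T = x := by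
    intro x hx hxT
    rcases eq_or_ne T 0 with hT | hT
    · simp [hT, le_antisymm (hT ▸ hxT) hx]
    · exact mul_div_cancel_right₀ x hT
  have hT : 0 ≤ T := hsum_e ▸ Finset.sum_nonneg fun i _ => he i
  set q : Fin G.order → Fin G'.order → ℝ := fun i j => q₀ i j + e i * f j / T
  have hq : q ∈ couplings G G' := by
    refine ⟨fun i j => add_nonneg (hq₀ i j) (div_nonneg (mul_nonneg (he i) (hf j)) hT),
      fun i => ?_, fun j => ?_⟩
    · have := hcancel (e i) (he i) (hsum_e ▸ Finset.single_le_sum (fun i _ => he i)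
        (Finset.mem_univ i))
      simp only [q, Finset.sum_add_distrib, ← Finset.sum_div, ← Finset.mul_sum, hsum_f, this, e]
      ring
    · have := hcancel (f j) (hf j) (hsum_f ▸ Finset.single_le_sum (fun j _ => hf j)
        (Finset.mem_univ j))
      simp only [q, Finset.sum_add_distrib, ← Finset.sum_div, ← Finset.sum_mul, hsum_e,
        mul_comm T, this, f]
      ring
  refine (wassersteinPow_le_cost hD hq).trans ?_
  have hmissing : ∑ i, ∑ j, e i * f j / T * D (G.atom i) (G'.atom j) ^ r ≤ B ^ r * T := by
    calc ∑ i, ∑ j, e i * f j / T * D (G.atom i) (G'.atom j) ^ r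
        ≤ ∑ i, ∑ j, e i * f j / T * B ^ r := by
          gcongr with i _ j _
          · exact div_nonneg (mul_nonneg (he i) (hf j)) hT
          · exact hD i j
          · exact hDB i j
      _ = B ^ r * ((∑ i, e i) * (∑ j, f j) / T) := by
          rw [Finset.sum_mul_sum, Finset.sum_div, Finset.mul_sum]
          refine Finset.sum_congr rfl fun i _ => ?_
          rw [Finset.sum_div, Finset.mul_sum]
          exact Finset.sum_congr rfl fun j _ => by ring
      _ = B ^ r * T := by rw [hsum_e, hsum_f, hcancel T hT le_rfl]
  simp only [q, add_mul, Finset.sum_add_distrib]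
  linarith

lemma wassersteinPow_le_pow {B : ℝ} (hD : ∀ i j, 0 ≤ D (G.atom i) (G'.atom j))
    (hDB : ∀ i j, D (G.atom i) (G'.atom j) ≤ B) : wassersteinPow D r G G' ≤ B ^ r := by
  simpa using wassersteinPow_le_of_subcoupling hD hDB 0 (fun _ _ => le_rfl)
    (fun i => by simpa using (G.p_pos i).le) (fun j => by simpa using (G'.p_pos j).le)

lemma mul_min_one_div {ρ p : ℝ} (hρ : 0 ≤ ρ) (hp : 0 ≤ p) : ρ * min 1 (p / ρ) = min ρ p := by
  rcases hρ.eq_or_lt with rfl | hρ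
  · simp [hp]
  · rw [mul_min_of_nonneg _ _ hρ.le, mul_one, mul_div_cancel₀ _ hρ.ne']

/-- Move each atom `i` of `G` to `σ i` as far as the weight of `σ i` allows, the rest
arbitrarily. -/
lemma wassersteinPow_le_of_assignment {B : ℝ} (hD : ∀ i j, 0 ≤ D (G.atom i) (G'.atom j))
    (hDB : ∀ i j, D (G.atom i) (G'.atom j) ≤ B) (σ : Fin G.order → Fin G'.order) :
    wassersteinPow D r G G' ≤ ∑ i, G.p i * D (G.atom i) (G'.atom (σ i)) ^ r +
      B ^ r * ∑ j, |∑ i ∈ Finset.univ.filter (σ · = j), G.p i - G'.p j| := by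
  set ρ : Fin G'.order → ℝ := fun j => ∑ i ∈ Finset.univ.filter (σ · = j), G.p i
  have hρ : ∀ j, 0 ≤ ρ j := fun j => Finset.sum_nonneg fun i _ => (G.p_pos i).le
  set q₀ : Fin G.order → Fin G'.order → ℝ := fun i j =>
    if σ i = j then G.p i * min 1 (G'.p j / ρ j) else 0
  have hrow : ∀ i, ∑ j, q₀ i j = G.p i * min 1 (G'.p (σ i) / ρ (σ i)) := by
    intro i
    simp [q₀, Finset.sum_ite_eq]
  have hcol : ∀ j, ∑ i, q₀ i j = min (ρ j) (G'.p j) := by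
    intro j
    rw [← mul_min_one_div (hρ j) (G'.p_pos j).le, Finset.sum_mul]
    simp [q₀, Finset.sum_filter]
  have hB : 0 ≤ B := (hD ⟨0, G.order_pos⟩ ⟨0, G'.order_pos⟩).trans (hDB _ _)
  have hmin : ∀ j, min 1 (G'.p j / ρ j) ≤ 1 := fun j => min_le_left _ _
  have hmin₀ : ∀ j, 0 ≤ min 1 (G'.p j / ρ j) :=
    fun j => le_min zero_le_one (div_nonneg (G'.p_pos j).le (hρ j))
  refine (wassersteinPow_le_of_subcoupling hD hDB q₀ ?_ ?_ ?_).trans (add_le_add ?_ ?_)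
  · intro i j
    simp only [q₀]
    split_ifs
    exacts [mul_nonneg (G.p_pos i).le (hmin₀ j), le_rfl]
  · exact fun i => (hrow i).trans_le (mul_le_of_le_one_right (G.p_pos i).le (hmin _))
  · exact fun j => (hcol j).trans_le (min_le_right _ _)
  · refine Finset.sum_le_sum fun i _ => ?_
    rw [Finset.sum_eq_single (σ i) (fun j _ hj => by simp [q₀, Ne.symm hj]) (by simp)]
    simp only [q₀, if_pos rfl]
    exact mul_le_mul_of_nonneg_right (mul_le_of_le_one_right (G.p_pos i).le (hmin _))
      (pow_nonneg (hD _ _) r)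
  · refine mul_le_mul_of_nonneg_left ?_ (pow_nonneg hB r)
    rw [Finset.sum_comm, Finset.sum_congr rfl fun j _ => hcol j, ← G'.p_sum,
      ← Finset.sum_sub_distrib]
    refine Finset.sum_le_sum fun j _ => ?_
    rcases le_total (ρ j) (G'.p j) with h | h
    · rw [min_eq_left h, abs_sub_comm, abs_of_nonneg (sub_nonneg.mpr h)]
    · rw [min_eq_right h, sub_self]
      exact abs_nonneg _

end Wasserstein

lemma sum_apply_le_sum_sum {ι κ : Type*} [Fintype ι] [Fintype κ] (σ : ι → κ)
    (A : κ → Finset ι) (hσ : ∀ i, i ∈ A (σ i)) (f : ι → κ → ℝ) (hf : ∀ i j, 0 ≤ f i j) :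
    ∑ i, f i (σ i) ≤ ∑ j, ∑ i ∈ A j, f i j := by
  rw [← Finset.sum_fiberwise Finset.univ σ]
  refine Finset.sum_le_sum fun j _ => ?_
  rw [Finset.sum_congr rfl fun i hi => by rw [(Finset.mem_filter.mp hi).2]]
  exact Finset.sum_le_sum_of_subset_of_nonneg
    (fun i hi => (Finset.mem_filter.mp hi).2 ▸ hσ i) (fun i _ _ => hf i j)

section Voronoi

variable {E : Type*} {D : E → E → ℝ} {G G0 : MixingMeasure E}

def tiedAtoms (D : E → E → ℝ) (G G0 : MixingMeasure E) : Finset (Fin G.order) :=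
  Finset.univ.filter fun i => ∃ j l, j ≠ l ∧ i ∈ voronoiD D G G0 j ∧ i ∈ voronoiD D G G0 l

lemma exists_forall_mem_voronoiD (D : E → E → ℝ) (G G0 : MixingMeasure E) :
    ∃ σ : Fin G.order → Fin G0.order, ∀ i, i ∈ voronoiD D G G0 (σ i) := by
  have h : ∀ i, ∃ j, i ∈ voronoiD D G G0 j := fun i => by
    obtain ⟨j, -, hj⟩ := Finset.exists_min_image Finset.univ (fun j => D (G.atom i) (G0.atom j))
      ⟨⟨0, G0.order_pos⟩, Finset.mem_univ _⟩
    exact ⟨j, Finset.mem_filter.mpr ⟨Finset.mem_univ i, fun l => hj l (Finset.mem_univ l)⟩⟩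
  exact ⟨fun i => (h i).choose, fun i => (h i).choose_spec⟩

lemma eq_of_mem_voronoiD_of_notMem_tiedAtoms {i : Fin G.order} {j l : Fin G0.order}
    (hi : i ∉ tiedAtoms D G G0) (hj : i ∈ voronoiD D G G0 j) (hl : i ∈ voronoiD D G G0 l) :
    j = l := by
  by_contra hjl
  exact hi (Finset.mem_filter.mpr ⟨Finset.mem_univ i, j, l, hjl, hj, hl⟩)

lemma le_two_mul_of_mem_voronoiD (hcomm : ∀ x y, D x y = D y x)
    (htri : ∀ x y z, D x z ≤ D x y + D y z) {i : Fin G.order} (j : Fin G0.order)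
    {l : Fin G0.order} (hl : i ∈ voronoiD D G G0 l) :
    D (G0.atom j) (G0.atom l) ≤ 2 * D (G.atom i) (G0.atom j) := by
  have h₁ := htri (G0.atom j) (G.atom i) (G0.atom l)
  have h₂ := (Finset.mem_filter.mp hl).2 j
  rw [hcomm (G0.atom j) (G.atom i)] at h₁
  linarith

lemma le_two_mul_of_mem_tiedAtoms (hcomm : ∀ x y, D x y = D y x)
    (htri : ∀ x y z, D x z ≤ D x y + D y z) {s : ℝ}
    (hsep : ∀ j l, j ≠ l → s ≤ D (G0.atom j) (G0.atom l)) {i : Fin G.order}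
    (hi : i ∈ tiedAtoms D G G0) (j : Fin G0.order) : s ≤ 2 * D (G.atom i) (G0.atom j) := by
  obtain ⟨-, j₁, j₂, hne, h₁, h₂⟩ := Finset.mem_filter.mp hi
  obtain ⟨l, hlj, hl⟩ : ∃ l, j ≠ l ∧ i ∈ voronoiD D G G0 l := by
    by_cases h : j = j₁
    · exact ⟨j₂, h ▸ hne, h₂⟩
    · exact ⟨j₁, h, h₁⟩
  exact (hsep j l hlj).trans (le_two_mul_of_mem_voronoiD hcomm htri j hl)

lemma sum_abs_sub_le_of_mem_voronoiD (σ : Fin G.order → Fin G0.order)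
    (hσ : ∀ i, i ∈ voronoiD D G G0 (σ i)) :
    ∑ j, |∑ i ∈ Finset.univ.filter (σ · = j), G.p i - G0.p j| ≤
      ∑ j, |∑ i ∈ voronoiD D G G0 j, G.p i - G0.p j| +
        G0.order * ∑ i ∈ tiedAtoms D G G0, G.p i := by
  have hcell : ∀ j, ∑ i ∈ voronoiD D G G0 j, G.p i =
      ∑ i ∈ Finset.univ.filter (σ · = j), G.p i +
        ∑ i ∈ (voronoiD D G G0 j).filter (σ · ≠ j), G.p i := by
    intro j
    rw [← Finset.sum_filter_add_sum_filter_not (voronoiD D G G0 j) (σ · = j)]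
    congr 2
    ext i
    simp only [Finset.mem_filter, Finset.mem_univ, true_and, and_iff_right_iff_imp]
    exact fun h => h ▸ hσ i
  have htied : ∀ j, ∑ i ∈ (voronoiD D G G0 j).filter (σ · ≠ j), G.p i ≤
      ∑ i ∈ tiedAtoms D G G0, G.p i := by
    refine fun j => Finset.sum_le_sum_of_subset_of_nonneg (fun i hi => ?_)
      (fun i _ _ => (G.p_pos i).le)
    obtain ⟨hij, hσj⟩ := Finset.mem_filter.mp hi
    exact Finset.mem_filter.mpr ⟨Finset.mem_univ i, j, σ i, Ne.symm hσj, hij, hσ i⟩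
  have hnonneg : ∀ j, 0 ≤ ∑ i ∈ (voronoiD D G G0 j).filter (σ · ≠ j), G.p i :=
    fun j => Finset.sum_nonneg fun i _ => (G.p_pos i).le
  calc ∑ j, |∑ i ∈ Finset.univ.filter (σ · = j), G.p i - G0.p j|
      ≤ ∑ j, (|∑ i ∈ voronoiD D G G0 j, G.p i - G0.p j| + ∑ i ∈ tiedAtoms D G G0, G.p i) := by
        refine Finset.sum_le_sum fun j _ => ?_
        rw [hcell j]
        set y := ∑ i ∈ (voronoiD D G G0 j).filter (σ · ≠ j), G.p i
        calc |∑ i ∈ Finset.univ.filter (σ · = j), G.p i - G0.p j|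
            = |(∑ i ∈ Finset.univ.filter (σ · = j), G.p i + y - G0.p j) - y| := by ring_nf
          _ ≤ |∑ i ∈ Finset.univ.filter (σ · = j), G.p i + y - G0.p j| + |y| := abs_sub _ _
          _ ≤ _ := by rw [abs_of_nonneg (hnonneg j)]; linarith [htied j]
    _ = _ := by simp [Finset.sum_add_distrib]

/-- An untied atom lies in a single cell, so the untied atoms outside the big cell `j₀` are too
few to meet every other cell. -/
lemma exists_voronoiD_subset_tiedAtoms {j₀ : Fin G0.order}
    (hj₀ : G.order + 1 < G0.order + (voronoiD D G G0 j₀).card) :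
    ∃ l, voronoiD D G G0 l ⊆ tiedAtoms D G G0 := by
  by_contra! h
  choose f hfA hfT using fun l => Finset.not_subset.mp (h l)
  have hf : Function.Injective f := fun l l' hll' =>
    eq_of_mem_voronoiD_of_notMem_tiedAtoms (hfT l) (hfA l) (hll' ▸ hfA l')
  have hdisj : Disjoint ((Finset.univ.erase j₀).image f) (voronoiD D G G0 j₀) := by
    refine Finset.disjoint_left.mpr fun i hi hij₀ => ?_
    obtain ⟨l, hl, rfl⟩ := Finset.mem_image.mp hi
    exact Finset.ne_of_mem_erase hl
      (eq_of_mem_voronoiD_of_notMem_tiedAtoms (hfT l) (hfA l) hij₀)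
  have hcard := Finset.card_le_univ ((Finset.univ.erase j₀).image f ∪ voronoiD D G G0 j₀)
  rw [Finset.card_union_of_disjoint hdisj, Finset.card_image_of_injective _ hf,
    Finset.card_erase_of_mem (Finset.mem_univ _), Finset.card_univ, Fintype.card_fin,
    Fintype.card_fin] at hcard
  have := G0.order_pos
  omega

lemma exists_pos_le_dist_atoms (hD : ∀ x y, x ≠ y → 0 < D x y) (G0 : MixingMeasure E) :
    ∃ s > 0, ∀ j l, j ≠ l → s ≤ D (G0.atom j) (G0.atom l) := by
  rcases (Finset.univ.offDiag : Finset (Fin G0.order × Fin G0.order)).eq_empty_or_nonempty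
    with h | h
  · refine ⟨1, one_pos, fun j l hjl => ?_⟩
    have : (j, l) ∈ (Finset.univ.offDiag : Finset (Fin G0.order × Fin G0.order)) := by simp [hjl]
    simp [h] at this
  · obtain ⟨⟨j₀, l₀⟩, h₀, hmin⟩ :=
      Finset.exists_min_image _ (fun jl => D (G0.atom jl.1) (G0.atom jl.2)) h
    refine ⟨_, hD _ _ (G0.atom_inj.ne (Finset.mem_offDiag.mp h₀).2.2), fun j l hjl => ?_⟩
    exact hmin (j, l) (by simp [hjl])

end Voronoi

section GroundMetric

variable {d : ℕ}

def meanPoint (θ : GaussParam d) : EuclideanSpace ℝ (Fin d) := WithLp.toLp 2 θ.1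

/-- The Frobenius norm `matNorm` is the Euclidean norm of this point. -/
def covPoint (θ : GaussParam d) : EuclideanSpace ℝ (Fin d × Fin d) :=
  WithLp.toLp 2 fun p => θ.2 p.1 p.2

lemma gDist_eq_dist_add_dist (θ θ' : GaussParam d) :
    gDist θ θ' = dist (meanPoint θ) (meanPoint θ') + dist (covPoint θ) (covPoint θ') := by
  simp [gDist, vecNorm, matNorm, meanPoint, covPoint, EuclideanSpace.dist_eq,
    Fintype.sum_prod_type, Real.dist_eq]

lemma gDist_comm (θ θ' : GaussParam d) : gDist θ θ' = gDist θ' θ := by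
  simp only [gDist_eq_dist_add_dist, dist_comm]

lemma gDist_triangle (θ₁ θ₂ θ₃ : GaussParam d) : gDist θ₁ θ₃ ≤ gDist θ₁ θ₂ + gDist θ₂ θ₃ := by
  simp only [gDist_eq_dist_add_dist]
  linarith [dist_triangle (meanPoint θ₁) (meanPoint θ₂) (meanPoint θ₃),
    dist_triangle (covPoint θ₁) (covPoint θ₂) (covPoint θ₃)]

lemma gDist_nonneg (θ θ' : GaussParam d) : 0 ≤ gDist θ θ' := by
  rw [gDist_eq_dist_add_dist]
  positivity

lemma gDist_pos {θ θ' : GaussParam d} (h : θ ≠ θ') : 0 < gDist θ θ' := by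
  rw [gDist_eq_dist_add_dist]
  by_cases hμ : θ.1 = θ'.1
  · have hcov : covPoint θ ≠ covPoint θ' := fun hcov =>
      h (Prod.ext hμ (Matrix.ext fun i j => congrFun (WithLp.toLp_injective 2 hcov) (i, j)))
    exact add_pos_of_nonneg_of_pos dist_nonneg (dist_pos.mpr hcov)
  · exact add_pos_of_pos_of_nonneg (dist_pos.mpr fun h' => hμ (WithLp.toLp_injective 2 h'))
      dist_nonneg

lemma continuous_gDist : Continuous fun θθ' : GaussParam d × GaussParam d => gDist θθ'.1 θθ'.2 := by
  unfold gDist vecNorm matNorm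
  fun_prop

lemma isCompact_gaussTheta (a : ℝ) {Ω : Set (Matrix (Fin d) (Fin d) ℝ)} (hΩ : IsCompact Ω) :
    IsCompact (gaussTheta a Ω) := by
  have : gaussTheta a Ω = (Set.univ.pi fun _ => Set.Icc (-a) a) ×ˢ Ω := by
    ext θ
    simp only [gaussTheta, Set.mem_ofPred_eq, Set.mem_prod, Set.mem_univ_pi]
  rw [this]
  exact (isCompact_univ_pi fun _ => isCompact_Icc).prod hΩ

lemma exists_gDist_le {Θ : Set (GaussParam d)} (hΘ : IsCompact Θ) :
    ∃ B, 1 ≤ B ∧ ∀ θ ∈ Θ, ∀ θ' ∈ Θ, gDist θ θ' ≤ B := by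
  obtain ⟨C, hC⟩ := (hΘ.prod hΘ).exists_bound_of_continuousOn continuous_gDist.continuousOn
  exact ⟨max C 1, le_max_right _ _, fun θ hθ θ' hθ' =>
    (le_abs_self _).trans ((hC (θ, θ') ⟨hθ, hθ'⟩).trans (le_max_left _ _))⟩

end GroundMetric

lemma min_one_pow_le_rpow {c x e : ℝ} {M : ℕ} (hc : 0 < c) (hcx : c ≤ x) (he : 0 ≤ e)
    (heM : e ≤ M) : min 1 c ^ M ≤ x ^ e := by
  rcases le_total 1 x with hx | hx
  · exact (pow_le_one₀ (by positivity) (min_le_left _ _)).trans (Real.one_le_rpow hx he)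
  · calc min 1 c ^ M ≤ x ^ M := pow_le_pow_left₀ (by positivity) ((min_le_right _ _).trans hcx) M
      _ = x ^ (M : ℝ) := (Real.rpow_natCast x M).symm
      _ ≤ x ^ e := Real.rpow_le_rpow_of_exponent_ge (hc.trans_le hcx) hx heM

lemma pow_le_mul_rpow {x B e : ℝ} {R : ℕ} (hx : 0 ≤ x) (hxB : x ≤ B) (hB : 1 ≤ B) (he : 0 ≤ e)
    (heR : e ≤ R) : x ^ R ≤ B ^ R * x ^ e := by
  rcases le_total x 1 with hx1 | hx1
  · calc x ^ R = x ^ (R : ℝ) := (Real.rpow_natCast x R).symm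
      _ ≤ x ^ e := Real.rpow_le_rpow_of_exponent_ge' hx hx1 he heR
      _ ≤ B ^ R * x ^ e := le_mul_of_one_le_left (by positivity) (one_le_pow₀ hB)
  · calc x ^ R ≤ B ^ R := pow_le_pow_left₀ hx hxB R
      _ ≤ B ^ R * x ^ e := le_mul_of_one_le_right (by positivity) (Real.one_le_rpow hx1 he)

/-- The cost in `lossDbar` of an atom at distances `u` (means) and `v` (covariances) from the
atom of `G0` whose Voronoi cell has `n` elements. -/
def cellCost (n : ℕ) (u v : ℝ) : ℝ :=
  if n = 1 then u + v else u ^ (rbar n : ℝ) + v ^ ((rbar n : ℝ) / 2)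

lemma cellCost_nonneg (n : ℕ) {u v : ℝ} (hu : 0 ≤ u) (hv : 0 ≤ v) : 0 ≤ cellCost n u v := by
  unfold cellCost
  split_ifs <;> positivity

lemma min_one_pow_le_cellCost {n M : ℕ} {u v η : ℝ} (hu : 0 ≤ u) (hv : 0 ≤ v) (hη : 0 < η)
    (huv : 2 * η ≤ u + v) (hM : 1 ≤ M) (hn : rbar n ≤ M) : min 1 η ^ M ≤ cellCost n u v := by
  have hnM : (rbar n : ℝ) ≤ M := by exact_mod_cast hn
  unfold cellCost
  split_ifs
  · simpa using min_one_pow_le_rpow hη (by linarith : η ≤ u + v) zero_le_one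
      (by exact_mod_cast hM)
  · rcases le_total η u with h | h
    · linarith [min_one_pow_le_rpow hη h (Nat.cast_nonneg _) hnM,
        Real.rpow_nonneg hv ((rbar n : ℝ) / 2)]
    · linarith [min_one_pow_le_rpow hη (by linarith : η ≤ v) (by positivity)
        (by linarith : (rbar n : ℝ) / 2 ≤ M), Real.rpow_nonneg hu (rbar n : ℝ)]

lemma pow_le_mul_cellCost {n R : ℕ} {u v B : ℝ} (hu : 0 ≤ u) (hv : 0 ≤ v) (huv : u + v ≤ B)
    (hB : 1 ≤ B) (hR : 1 ≤ R) (hn : rbar n ≤ R) : (u + v) ^ R ≤ (2 * B) ^ R * cellCost n u v := by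
  have hnR : (rbar n : ℝ) ≤ R := by exact_mod_cast hn
  unfold cellCost
  split_ifs
  · calc (u + v) ^ R ≤ B ^ R * (u + v) ^ (1 : ℝ) :=
          pow_le_mul_rpow (by positivity) huv hB zero_le_one (by exact_mod_cast hR)
      _ ≤ (2 * B) ^ R * (u + v) := by
          rw [Real.rpow_one]
          gcongr
          linarith
  · rw [mul_pow, mul_assoc]
    rcases le_total v u with h | h
    · calc (u + v) ^ R ≤ (2 * u) ^ R := pow_le_pow_left₀ (by positivity) (by linarith) R
        _ ≤ 2 ^ R * (B ^ R * u ^ (rbar n : ℝ)) := by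
          rw [mul_pow]
          gcongr
          exact pow_le_mul_rpow hu (by linarith) hB (Nat.cast_nonneg _) hnR
        _ ≤ _ := by
          gcongr
          exact le_add_of_nonneg_right (Real.rpow_nonneg hv _)
    · calc (u + v) ^ R ≤ (2 * v) ^ R := pow_le_pow_left₀ (by positivity) (by linarith) R
        _ ≤ 2 ^ R * (B ^ R * v ^ ((rbar n : ℝ) / 2)) := by
          rw [mul_pow]
          gcongr
          exact pow_le_mul_rpow hv (by linarith) hB (by positivity) (by linarith)
        _ ≤ _ := by
          gcongr
          exact le_add_of_nonneg_left (Real.rpow_nonneg hu _)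

section Loss

variable {d : ℕ} {G G0 : MixingMeasure (GaussParam d)}

def atomCost (G G0 : MixingMeasure (GaussParam d)) (i : Fin G.order) (j : Fin G0.order) : ℝ :=
  cellCost (voronoiD gDist G G0 j).card (vecNorm ((G.atom i).1 - (G0.atom j).1))
    (matNorm ((G.atom i).2 - (G0.atom j).2))

def lossCells (G G0 : MixingMeasure (GaussParam d)) : ℝ :=
  ∑ j, ∑ i ∈ voronoiD gDist G G0 j, G.p i * atomCost G G0 i j

lemma atomCost_nonneg (i : Fin G.order) (j : Fin G0.order) : 0 ≤ atomCost G G0 i j :=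
  cellCost_nonneg _ (Real.sqrt_nonneg _) (Real.sqrt_nonneg _)

lemma lossDbar_eq (G G0 : MixingMeasure (GaussParam d)) :
    lossDbar G G0 =
      lossCells G G0 + ∑ j, |∑ i ∈ voronoiD gDist G G0 j, G.p i - G0.p j| := by
  unfold lossDbar lossCells
  congr 1
  refine Finset.sum_congr rfl fun j _ => ?_
  split_ifs with h₁ h₂
  · simp [atomCost, cellCost, h₁]
  · simp [atomCost, cellCost, h₂.ne']
  · rw [Finset.card_eq_zero.mp (by omega : (voronoiD gDist G G0 j).card = 0), Finset.sum_empty]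

/-- Tied atoms are at distance at least `s / 2` from every atom of `G0`, so their cost is
bounded below. -/
lemma mul_sum_tiedAtoms_le_lossCells {s : ℝ} {M : ℕ} (hs : 0 < s)
    (hsep : ∀ j l, j ≠ l → s ≤ gDist (G0.atom j) (G0.atom l)) (hM : 1 ≤ M)
    (hcard : ∀ j, rbar (voronoiD gDist G G0 j).card ≤ M) :
    min 1 (s / 4) ^ M * ∑ i ∈ tiedAtoms gDist G G0, G.p i ≤ lossCells G G0 := by
  obtain ⟨σ, hσ⟩ := exists_forall_mem_voronoiD gDist G G0
  calc min 1 (s / 4) ^ M * ∑ i ∈ tiedAtoms gDist G G0, G.p i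
      ≤ ∑ i ∈ tiedAtoms gDist G G0, G.p i * atomCost G G0 i (σ i) := by
        rw [Finset.mul_sum]
        refine Finset.sum_le_sum fun i hi => ?_
        rw [mul_comm]
        refine mul_le_mul_of_nonneg_left (min_one_pow_le_cellCost (Real.sqrt_nonneg _)
          (Real.sqrt_nonneg _) (by positivity) ?_ hM (hcard _)) (G.p_pos i).le
        have := le_two_mul_of_mem_tiedAtoms gDist_comm gDist_triangle hsep hi (σ i)
        exact (by linarith : 2 * (s / 4) ≤ gDist (G.atom i) (G0.atom (σ i)))
    _ ≤ ∑ i, G.p i * atomCost G G0 i (σ i) :=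
        Finset.sum_le_sum_of_subset_of_nonneg (Finset.subset_univ _)
          fun i _ _ => mul_nonneg (G.p_pos i).le (atomCost_nonneg _ _)
    _ ≤ lossCells G G0 := sum_apply_le_sum_sum σ _ hσ (fun i j => G.p i * atomCost G G0 i j)
          fun i j => mul_nonneg (G.p_pos i).le (atomCost_nonneg _ _)

/-- A cell made of tied atoms carries little mass, which the mass term of the loss detects. -/
lemma mul_le_lossDbar_of_voronoiD_subset_tiedAtoms {κ : ℝ} (hκ : 0 ≤ κ) (hκ₁ : κ ≤ 1)
    (htied : κ * ∑ i ∈ tiedAtoms gDist G G0, G.p i ≤ lossCells G G0) {l : Fin G0.order}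
    (hl : voronoiD gDist G G0 l ⊆ tiedAtoms gDist G G0) : κ * G0.p l ≤ lossDbar G G0 := by
  set τ := ∑ i ∈ tiedAtoms gDist G G0, G.p i
  have hS : ∑ i ∈ voronoiD gDist G G0 l, G.p i ≤ τ :=
    Finset.sum_le_sum_of_subset_of_nonneg hl fun i _ _ => (G.p_pos i).le
  have hmass : G0.p l - τ ≤ ∑ j, |∑ i ∈ voronoiD gDist G G0 j, G.p i - G0.p j| := by
    refine le_trans ?_ (Finset.single_le_sum (fun j _ => abs_nonneg _) (Finset.mem_univ l))
    rw [abs_sub_comm]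
    linarith [le_abs_self (G0.p l - ∑ i ∈ voronoiD gDist G G0 l, G.p i)]
  have hmass₀ : 0 ≤ ∑ j, |∑ i ∈ voronoiD gDist G G0 j, G.p i - G0.p j| :=
    Finset.sum_nonneg fun j _ => abs_nonneg _
  have hκmass : κ * (G0.p l - τ) ≤ ∑ j, |∑ i ∈ voronoiD gDist G G0 j, G.p i - G0.p j| := by
    rcases le_total 0 (G0.p l - τ) with h | h
    · exact (mul_le_of_le_one_left h hκ₁).trans hmass
    · exact (mul_nonpos_of_nonneg_of_nonpos hκ h).trans hmass₀
  rw [lossDbar_eq]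
  linarith

lemma wassersteinPow_le_mul_lossDbar {B κ : ℝ} {R : ℕ} (hB : 1 ≤ B)
    (hDB : ∀ i j, gDist (G.atom i) (G0.atom j) ≤ B) (hR : 1 ≤ R)
    (hcard : ∀ j, rbar (voronoiD gDist G G0 j).card ≤ R) (hκ : 0 < κ)
    (htied : κ * ∑ i ∈ tiedAtoms gDist G G0, G.p i ≤ lossCells G G0) :
    wassersteinPow gDist R G G0 ≤ ((2 * B) ^ R + B ^ R * (1 + G0.order / κ)) * lossDbar G G0 := by
  obtain ⟨σ, hσ⟩ := exists_forall_mem_voronoiD gDist G G0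
  rw [lossDbar_eq]
  set L₁ := lossCells G G0
  set L₂ := ∑ j, |∑ i ∈ voronoiD gDist G G0 j, G.p i - G0.p j|
  set τ := ∑ i ∈ tiedAtoms gDist G G0, G.p i
  have hL₁ : 0 ≤ L₁ := (mul_nonneg hκ.le (Finset.sum_nonneg fun i _ => (G.p_pos i).le)).trans htied
  have hL₂ : 0 ≤ L₂ := Finset.sum_nonneg fun j _ => abs_nonneg _
  have hnear : ∑ i, G.p i * gDist (G.atom i) (G0.atom (σ i)) ^ R ≤ (2 * B) ^ R * L₁ := by
    calc ∑ i, G.p i * gDist (G.atom i) (G0.atom (σ i)) ^ R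
        ≤ ∑ i, (2 * B) ^ R * (G.p i * atomCost G G0 i (σ i)) := by
          refine Finset.sum_le_sum fun i _ => ?_
          rw [mul_left_comm]
          exact mul_le_mul_of_nonneg_left (pow_le_mul_cellCost (Real.sqrt_nonneg _)
            (Real.sqrt_nonneg _) (hDB i (σ i)) hB hR (hcard _)) (G.p_pos i).le
      _ ≤ (2 * B) ^ R * L₁ := by
          rw [← Finset.mul_sum]
          exact mul_le_mul_of_nonneg_left (sum_apply_le_sum_sum σ _ hσ
            (fun i j => G.p i * atomCost G G0 i j)
            fun i j => mul_nonneg (G.p_pos i).le (atomCost_nonneg _ _)) (by positivity)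
  have hτ : G0.order * τ ≤ G0.order / κ * L₁ := by
    rw [div_mul_eq_mul_div, le_div_iff₀ hκ]
    nlinarith [(Nat.cast_nonneg G0.order : (0 : ℝ) ≤ G0.order)]
  have hB₀ : 0 ≤ B := zero_le_one.trans hB
  calc wassersteinPow gDist R G G0 ≤ (2 * B) ^ R * L₁ + B ^ R * (L₂ + G0.order / κ * L₁) :=
        (wassersteinPow_le_of_assignment (fun i j => gDist_nonneg _ _) hDB σ).trans
          (add_le_add hnear (mul_le_mul_of_nonneg_left
            ((sum_abs_sub_le_of_mem_voronoiD σ hσ).trans (by linarith)) (by positivity)))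
    _ ≤ ((2 * B) ^ R + B ^ R * (1 + G0.order / κ)) * (L₁ + L₂) := by
        have : 0 ≤ (2 * B) ^ R * L₂ + B ^ R * L₁ + B ^ R * (G0.order / κ * L₂) := by positivity
        linarith

/-- A cell with too many atoms forces a cell made of tied atoms, which bounds the loss from
below, while `W_R^R ≤ B ^ R` always. -/
lemma mul_wassersteinPow_le_lossDbar_of_card_lt {B κ p₀ : ℝ} {R : ℕ}
    (hDB : ∀ i j, gDist (G.atom i) (G0.atom j) ≤ B) (hB : 0 < B) (hκ : 0 ≤ κ) (hκ₁ : κ ≤ 1)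
    (hp₀ : 0 ≤ p₀) (hp₀G0 : ∀ j, p₀ ≤ G0.p j)
    (htied : κ * ∑ i ∈ tiedAtoms gDist G G0, G.p i ≤ lossCells G G0) {j₀ : Fin G0.order}
    (hj₀ : G.order + 1 < G0.order + (voronoiD gDist G G0 j₀).card) :
    κ * p₀ / B ^ R * wassersteinPow gDist R G G0 ≤ lossDbar G G0 := by
  obtain ⟨l, hl⟩ := exists_voronoiD_subset_tiedAtoms hj₀
  calc κ * p₀ / B ^ R * wassersteinPow gDist R G G0
      ≤ κ * p₀ / B ^ R * B ^ R := mul_le_mul_of_nonneg_left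
        (wassersteinPow_le_pow (fun _ _ => gDist_nonneg _ _) hDB) (by positivity)
    _ ≤ κ * G0.p l := by
        rw [div_mul_cancel₀ _ (by positivity)]
        exact mul_le_mul_of_nonneg_left (hp₀G0 l) hκ
    _ ≤ lossDbar G G0 := mul_le_lossDbar_of_voronoiD_subset_tiedAtoms hκ hκ₁ htied hl

end Loss

end

theorem lossDbar_dominates_wasserstein_general
    (d : ℕ) (a : ℝ)
    (Ω : Set (Matrix (Fin d) (Fin d) ℝ)) (hΩ : goodScaleSet Ω)
    (k k0 : ℕ)
    (G0 : MixingMeasure (GaussParam d)) (hG0 : G0.memE k0 (gaussTheta a Ω)) :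
    ∃ c : ℝ, 0 < c ∧
      ∀ G : MixingMeasure (GaussParam d), G.memO k (gaussTheta a Ω) →
        c * wassersteinPow gDist (rbar (k - k0 + 1)) G G0 ≤ lossDbar G G0 := by
  obtain ⟨rfl, hG0Θ⟩ := hG0
  obtain ⟨B, hB, hΘB⟩ := exists_gDist_le (isCompact_gaussTheta a hΩ.1)
  obtain ⟨s, hs, hsep⟩ := exists_pos_le_dist_atoms (fun _ _ => gDist_pos) G0
  obtain ⟨p₀, hp₀, hp₀G0⟩ := G0.exists_pos_le_p
  set R := rbar (k - G0.order + 1)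
  set κ := min 1 (s / 4) ^ rbar k
  have hκ : 0 < κ := by positivity
  set K := (2 * B) ^ R + B ^ R * (1 + G0.order / κ)
  have hK : 0 < K := by positivity
  refine ⟨min (1 / K) (κ * p₀ / B ^ R), by positivity, fun G ⟨hGk, hGΘ⟩ => ?_⟩
  have hDB : ∀ i j, gDist (G.atom i) (G0.atom j) ≤ B := fun i j => hΘB _ (hGΘ i) _ (hG0Θ j)
  have hW : 0 ≤ wassersteinPow gDist R G G0 := wassersteinPow_nonneg fun _ _ => gDist_nonneg _ _
  have hcard : ∀ j, (voronoiD gDist G G0 j).card ≤ G.order := fun j =>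
    (Finset.card_le_univ _).trans (Fintype.card_fin _).le
  have htied := mul_sum_tiedAtoms_le_lossCells hs hsep (one_le_rbar k)
    fun j => rbar_mono ((hcard j).trans hGk)
  by_cases hbig : ∃ j, k - G0.order + 1 < (voronoiD gDist G G0 j).card
  · obtain ⟨j₀, hj₀⟩ := hbig
    exact (mul_le_mul_of_nonneg_right (min_le_right _ _) hW).trans
      (mul_wassersteinPow_le_lossDbar_of_card_lt hDB (by positivity) hκ.le
        (pow_le_one₀ (by positivity) (min_le_left _ _)) hp₀.le hp₀G0 htied
        (j₀ := j₀) (by have := hcard j₀; omega))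
  · push Not at hbig
    refine (mul_le_mul_of_nonneg_right (min_le_left _ _) hW).trans ?_
    rw [one_div_mul_eq_div, div_le_iff₀' hK]
    exact wassersteinPow_le_mul_lossDbar hB hDB (one_le_rbar _) (fun j => rbar_mono (hbig j)) hκ
      htied

/-- the loss `𝒟̄` dominates `W_{r̄}^{r̄}`, with `r̄ = r̄(k - k0 + 1)`,
for the ground metric `D((μ,Σ),(μ',Σ')) = ‖μ - μ'‖ + ‖Σ - Σ'‖`. (Note `r̄(1) = 1`, which
covers the case `k = k0`.) -/
theorem lossDbar_dominates_wasserstein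
    (d : ℕ) (a : ℝ) (ha : 0 < a)
    (Ω : Set (Matrix (Fin d) (Fin d) ℝ)) (hΩ : goodScaleSet Ω)
    (k k0 : ℕ) (hk0 : 1 ≤ k0) (hk : k0 ≤ k)
    (G0 : MixingMeasure (GaussParam d)) (hG0 : G0.memE k0 (gaussTheta a Ω)) :
    ∃ c : ℝ, 0 < c ∧
      ∀ G : MixingMeasure (GaussParam d), G.memO k (gaussTheta a Ω) →
        c * wassersteinPow gDist (rbar (k - k0 + 1)) G G0 ≤ lossDbar G G0 :=
  lossDbar_dominates_wasserstein_general d a Ω hΩ k k0 G0 hG0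
end

section
/- Let Θ ⊆ ℝ be compact with nonempty interior, let k ≥ k0 ≥ k* ≥ 2 with k + k0 > 2k*, set r = k + k0 − 2k* + 1 ≥ 2, and fix G* ∈ E_{k*}(Θ) having an atom in the interior of Θ. Then the supremum of W̃(G, G') / W_r^r(G, G') over all pairs G ∈ E_{k'}(Θ) with k' ≤ k and G' ∈ E_{k0}(Θ) with G ≠ G' is infinite. -/
open MeasureTheory

attribute [local instance] Classical.propDecidable

/-- The absolute-value distance on `ℝ`. -/
noncomputable def absDist (a b : ℝ) : ℝ := |a - b|

/-- The loss function `W̃(G, G')` of equation (11), defined relative to the Voronoi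
cells generated by the atoms of the limiting mixing measure `Gstar`. -/
noncomputable def Wtilde (Gstar G G' : MixingMeasure ℝ) : ℝ :=
  sInf {c | ∃ q ∈ couplings G G', c =
    (∑ l : Fin Gstar.order,
      ∑ i ∈ voronoiD absDist G Gstar l, ∑ j ∈ voronoiD absDist G' Gstar l,
        q i j * |G.atom i - G'.atom j| ^
          ((voronoiD absDist G Gstar l).card + (voronoiD absDist G' Gstar l).card - 1))
    + ∑ i, ∑ j,
        if ∃ l, i ∈ voronoiD absDist G Gstar l ∧ j ∈ voronoiD absDist G' Gstar l
        then 0 else q i j}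

/-!
Move an interior atom `θ₀` of `G*` to `θ₀ + ε` to get `G`, and split it into the `m + 1` atoms
`θ₀, θ₀ - ε, …, θ₀ - m ε` of equal weight, `m = k0 - k*`, to get `G'` of order `k0`. Sending the
moved atom onto the cluster shows `W_r^r(G, G') ≤ ((m + 1) ε)^r`. In `W̃`, the Voronoi cell of `θ₀`
holds one atom of `G` and `m + 1` atoms of `G'`, so the mass of the moved atom pays at least
`ε^(m+1)` per unit if it stays in the cell and `1` if it leaves. As `r = m + 1 + (k - k*)` and
`k > k*`, the ratio is at least of order `ε^(-(k - k*))`.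
-/

open Filter Topology MixingMeasure

theorem exists_pos_pairwise_le_dist {ι X : Type*} [Finite ι] [MetricSpace X] {a : ι → X}
    (ha : Function.Injective a) : ∃ γ > 0, Pairwise fun i j => γ ≤ dist (a i) (a j) := by
  have hγ : ∀ᶠ γ in 𝓝 (0 : ℝ), Pairwise fun i j => γ ≤ dist (a i) (a j) := by
    simp only [Pairwise, eventually_all]
    intro i j hij
    exact eventually_le_nhds (dist_pos.2 (ha.ne hij))
  obtain ⟨γ, hγ, hγ₀⟩ := ((hγ.filter_mono nhdsWithin_le_nhds).and
    (self_mem_nhdsWithin (s := Set.Ioi 0))).exists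
  exact ⟨γ, hγ₀, hγ⟩

theorem forall_dist_le_iff_eq {ι X : Type*} [PseudoMetricSpace X] {a : ι → X} {γ : ℝ}
    (ha : Pairwise fun i j => γ ≤ dist (a i) (a j)) {x : X} {c : ι} (hx : dist x (a c) < γ / 2)
    (l : ι) : (∀ l', dist x (a l) ≤ dist x (a l')) ↔ l = c := by
  constructor
  · intro h
    by_contra hlc
    have := dist_triangle_left (a l) (a c) x
    linarith [ha hlc, h c]
  · rintro rfl l'
    rcases eq_or_ne l l' with rfl | hll'
    · rfl
    · have := dist_triangle_left (a l) (a l') x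
      linarith [ha hll']

theorem ne_of_dist_lt_half {ι X : Type*} [PseudoMetricSpace X] {a : ι → X} {γ : ℝ}
    (ha : Pairwise fun i j => γ ≤ dist (a i) (a j)) {x : X} {c : ι} (hx : dist x (a c) < γ / 2)
    {i : ι} (hi : i ≠ c) : a i ≠ x := by
  rintro rfl
  linarith [ha hi, dist_nonneg (x := a i) (y := a c)]

theorem eventually_mul_pow_lt {c : ℝ} (hc : 0 < c) (a : ℝ) {d : ℕ} (hd : d ≠ 0) :
    ∀ᶠ ε in 𝓝 (0 : ℝ), a * ε ^ d < c :=
  ((continuous_const.mul (continuous_pow d)).tendsto' 0 0 (by simp [hd])).eventually_lt_const hc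

noncomputable section

variable {E : Type*}

namespace MixingMeasure

def moveAtom (G : MixingMeasure E) (i₀ : Fin G.order) (y : E) (hy : ∀ i, i ≠ i₀ → G.atom i ≠ y) :
    MixingMeasure E where
  order := G.order
  p := G.p
  atom := Function.update G.atom i₀ y
  p_pos := G.p_pos
  p_sum := G.p_sum
  atom_inj i j hij := by
    by_cases hi : i = i₀ <;> by_cases hj : j = i₀
    · rw [hi, hj]
    · rw [hi, Function.update_self, Function.update_of_ne hj] at hij
      exact absurd hij.symm (hy j hj)
    · rw [hj, Function.update_self, Function.update_of_ne hi] at hij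
      exact absurd hij (hy i hi)
    · rwa [Function.update_of_ne hi, Function.update_of_ne hj, G.atom_inj.eq_iff] at hij

def splitAtom (G : MixingMeasure E) (i₀ : Fin G.order) {m : ℕ} (x : Fin m → E)
    (hx : Function.Injective x) (hxG : ∀ t i, x t ≠ G.atom i) : MixingMeasure E where
  order := G.order + m
  p := Fin.append (Function.update G.p i₀ (G.p i₀ / (m + 1))) fun _ => G.p i₀ / (m + 1)
  atom := Fin.append G.atom x
  p_pos := Fin.addCases (fun i => by
      by_cases hi : i = i₀
      · subst hi
        simpa using div_pos (G.p_pos i) (by positivity)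
      · simpa [hi] using G.p_pos i)
    fun _ => by simpa using div_pos (G.p_pos i₀) (by positivity)
  p_sum := by
    rw [Fin.sum_univ_add]
    simp only [Fin.append_left, Fin.append_right, Finset.sum_update_of_mem (Finset.mem_univ _),
      Finset.sum_const, Finset.card_univ, Fintype.card_fin, nsmul_eq_mul]
    have hrest := Finset.sum_eq_sum_sdiff_singleton_add (Finset.mem_univ i₀) G.p
    have hsplit : ((m : ℝ) + 1) * (G.p i₀ / (m + 1)) = G.p i₀ := mul_div_cancel₀ _ (by positivity)
    linarith [G.p_sum]
  atom_inj := Fin.append_injective_iff.2 ⟨G.atom_inj, hx, fun i t => (hxG t i).symm⟩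

/-- Every atom keeps its mass, except that `i₀` sends an `m + 1`-th of its mass to each of the
`m` new atoms of `G.splitAtom i₀ x`. -/
def splitCoupling (G : MixingMeasure E) (i₀ : Fin G.order) (m : ℕ) :
    Fin G.order → Fin (G.order + m) → ℝ := fun i =>
  Fin.append (Pi.single i (Function.update G.p i₀ (G.p i₀ / (m + 1)) i))
    fun _ => (Pi.single i₀ (G.p i₀ / (m + 1)) : Fin G.order → ℝ) i

theorem memE_moveAtom {G : MixingMeasure E} {n : ℕ} {Θ : Set E} (hG : G.memE n Θ)
    (i₀ : Fin G.order) {y : E} (hy : ∀ i, i ≠ i₀ → G.atom i ≠ y) (hyΘ : y ∈ Θ) :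
    (G.moveAtom i₀ y hy).memE n Θ := by
  refine ⟨hG.1, fun (i : Fin G.order) => ?_⟩
  by_cases hi : i = i₀
  · simpa [moveAtom, hi] using hyΘ
  · simpa [moveAtom, Function.update_apply, hi] using hG.2 i

theorem memE_splitAtom {G : MixingMeasure E} {n : ℕ} {Θ : Set E} (hG : G.memE n Θ)
    (i₀ : Fin G.order) {m : ℕ} {x : Fin m → E} (hx : Function.Injective x)
    (hxG : ∀ t i, x t ≠ G.atom i) (hxΘ : ∀ t, x t ∈ Θ) :
    (G.splitAtom i₀ x hx hxG).memE (n + m) Θ :=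
  ⟨by simp [splitAtom, hG.1], Fin.addCases (by simpa [splitAtom] using hG.2)
    (by simpa [splitAtom] using hxΘ)⟩

theorem not_mixEq_of_forall_atom_ne {G G' : MixingMeasure E} {i : Fin G.order}
    (hi : ∀ j, G'.atom j ≠ G.atom i) : ¬G.MixEq G' :=
  fun ⟨e, he⟩ => hi (e i) (he i).1

theorem splitCoupling_mem_couplings (G : MixingMeasure E) (i₀ : Fin G.order) {y : E}
    (hy : ∀ i, i ≠ i₀ → G.atom i ≠ y) {m : ℕ} {x : Fin m → E} (hx : Function.Injective x)
    (hxG : ∀ t i, x t ≠ G.atom i) :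
    G.splitCoupling i₀ m ∈ couplings (G.moveAtom i₀ y hy) (G.splitAtom i₀ x hx hxG) := by
  have hc : 0 < G.p i₀ / (m + 1) := div_pos (G.p_pos i₀) (by positivity)
  have hw : ∀ i, 0 ≤ Function.update G.p i₀ (G.p i₀ / (m + 1)) i := fun i => by
    rcases eq_or_ne i i₀ with rfl | hi
    · simpa using hc.le
    · simpa [hi] using (G.p_pos i).le
  refine ⟨fun (i : Fin G.order) (j : Fin (G.order + m)) => ?_, fun (i : Fin G.order) => ?_,
    fun (j : Fin (G.order + m)) => ?_⟩
  · refine Fin.addCases (fun j => ?_) (fun t => ?_) j <;>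
      simp only [splitCoupling, Fin.append_left, Fin.append_right, Pi.single_apply] <;>
      split_ifs <;> simp [hw, hc.le]
  · show ∑ j : Fin (G.order + m), G.splitCoupling i₀ m i j = G.p i
    rw [Fin.sum_univ_add]
    simp only [splitCoupling, Fin.append_left, Fin.append_right, Finset.sum_pi_single',
      Finset.mem_univ, if_true, Finset.sum_const, Finset.card_univ, Fintype.card_fin,
      nsmul_eq_mul]
    by_cases hi : i = i₀
    · subst hi
      simp only [Function.update_self, Pi.single_eq_same]
      field_simp
      ring
    · simp [hi]
  · show ∑ i : Fin G.order, G.splitCoupling i₀ m i j = (G.splitAtom i₀ x hx hxG).p j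
    refine Fin.addCases (fun j => ?_) (fun t => ?_) j <;>
      simp [splitCoupling, splitAtom]

end MixingMeasure

theorem couplings_nonempty (G G' : MixingMeasure E) : (couplings G G').Nonempty :=
  ⟨fun i j => G.p i * G'.p j, fun i j => mul_nonneg (G.p_pos i).le (G'.p_pos j).le,
    fun i => by simp [← Finset.mul_sum, G'.p_sum], fun j => by simp [← Finset.sum_mul, G.p_sum]⟩

theorem wassersteinPow_nonneg_s13 {D : E → E → ℝ} (hD : ∀ a b, 0 ≤ D a b) (r : ℕ)
    (G G' : MixingMeasure E) : 0 ≤ wassersteinPow D r G G' :=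
  Real.sInf_nonneg fun _ ⟨_, hq, hc⟩ => hc ▸ Finset.sum_nonneg fun i _ =>
    Finset.sum_nonneg fun j _ => mul_nonneg (hq.1 i j) (pow_nonneg (hD _ _) r)

theorem wassersteinPow_le_pow_s13 {D : E → E → ℝ} (hD : ∀ a b, 0 ≤ D a b) {G G' : MixingMeasure E}
    {q : Fin G.order → Fin G'.order → ℝ} (hq : q ∈ couplings G G') {s : ℝ}
    (hs : ∀ i j, q i j ≠ 0 → D (G.atom i) (G'.atom j) ≤ s) (r : ℕ) :
    wassersteinPow D r G G' ≤ s ^ r := by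
  have hbdd : BddBelow {c | ∃ q ∈ couplings G G',
      c = ∑ i, ∑ j, q i j * D (G.atom i) (G'.atom j) ^ r} :=
    ⟨0, fun _ ⟨_, hq, hc⟩ => hc ▸ Finset.sum_nonneg fun i _ =>
      Finset.sum_nonneg fun j _ => mul_nonneg (hq.1 i j) (pow_nonneg (hD _ _) r)⟩
  refine (csInf_le hbdd ⟨q, hq, rfl⟩).trans ?_
  calc ∑ i, ∑ j, q i j * D (G.atom i) (G'.atom j) ^ r ≤ ∑ i, ∑ j, q i j * s ^ r := by
        refine Finset.sum_le_sum fun i _ => Finset.sum_le_sum fun j _ => ?_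
        by_cases hqij : q i j = 0
        · simp [hqij]
        · exact mul_le_mul_of_nonneg_left (pow_le_pow_left₀ (hD _ _) (hs i j hqij) r) (hq.1 i j)
    _ = s ^ r := by simp [← Finset.sum_mul, hq.2.1, G.p_sum]

theorem wassersteinPow_moveAtom_splitAtom_le {D : E → E → ℝ} (hD : ∀ a b, 0 ≤ D a b)
    (hDself : ∀ a, D a a = 0) (G : MixingMeasure E) (i₀ : Fin G.order) {y : E}
    (hy : ∀ i, i ≠ i₀ → G.atom i ≠ y) {m : ℕ} {x : Fin m → E} (hx : Function.Injective x)
    (hxG : ∀ t i, x t ≠ G.atom i) {s : ℝ} (hs : 0 ≤ s) (hy₀ : D y (G.atom i₀) ≤ s)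
    (hyx : ∀ t, D y (x t) ≤ s) (r : ℕ) :
    wassersteinPow D r (G.moveAtom i₀ y hy) (G.splitAtom i₀ x hx hxG) ≤ s ^ r := by
  refine wassersteinPow_le_pow_s13 hD (G.splitCoupling_mem_couplings i₀ hy hx hxG)
    (fun (i : Fin G.order) (j : Fin (G.order + m)) hq => ?_) r
  induction j using Fin.addCases with
  | left j =>
    simp only [splitCoupling, Fin.append_left, Pi.single_apply, ne_eq, ite_eq_right_iff,
      not_forall] at hq
    obtain ⟨rfl, -⟩ := hq
    rcases eq_or_ne j i₀ with rfl | hj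
    · simpa [moveAtom, splitAtom] using hy₀
    · simpa [moveAtom, splitAtom, hj, hDself] using hs
  | right t =>
    simp only [splitCoupling, Fin.append_right, Pi.single_apply, ne_eq, ite_eq_right_iff,
      not_forall] at hq
    obtain ⟨rfl, -⟩ := hq
    simpa [moveAtom, splitAtom] using hyx t

end

theorem mem_voronoiD_absDist_iff {Gstar G : MixingMeasure ℝ} {γ : ℝ}
    (hsep : Pairwise fun l l' => γ ≤ dist (Gstar.atom l) (Gstar.atom l'))
    {c : Fin G.order → Fin Gstar.order} (hc : ∀ i, dist (G.atom i) (Gstar.atom (c i)) < γ / 2)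
    (i : Fin G.order) (l : Fin Gstar.order) : i ∈ voronoiD absDist G Gstar l ↔ c i = l := by
  simp only [voronoiD, Finset.mem_filter, Finset.mem_univ, true_and]
  simp only [absDist, ← Real.dist_eq]
  rw [forall_dist_le_iff_eq hsep (hc i), eq_comm]

theorem le_Wtilde {Gstar G G' : MixingMeasure ℝ} {i₀ : Fin G.order} {l₀ : Fin Gstar.order}
    (hi₀ : ∀ l, i₀ ∈ voronoiD absDist G Gstar l ↔ l = l₀) {δ : ℝ} (hδ₀ : 0 ≤ δ) (hδ₁ : δ ≤ 1)
    (hfar : ∀ j ∈ voronoiD absDist G' Gstar l₀, δ ≤ |G.atom i₀ - G'.atom j|) :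
    G.p i₀ * δ ^ ((voronoiD absDist G Gstar l₀).card + (voronoiD absDist G' Gstar l₀).card - 1)
      ≤ Wtilde Gstar G G' := by
  set A := voronoiD absDist G Gstar
  set A' := voronoiD absDist G' Gstar
  set n := (A l₀).card + (A' l₀).card - 1
  obtain ⟨q₀, hq₀⟩ := couplings_nonempty G G'
  refine le_csInf ⟨_, q₀, hq₀, rfl⟩ ?_
  rintro _ ⟨q, hq, rfl⟩
  -- The mass of `i₀` pays at least `δ ^ n` per unit in its own cell, and `1 ≥ δ ^ n` outside it.
  have hrow : G.p i₀ * δ ^ n ≤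
      ∑ j, if j ∈ A' l₀ then q i₀ j * |G.atom i₀ - G'.atom j| ^ n else q i₀ j := by
    rw [← hq.2.1 i₀, Finset.sum_mul]
    refine Finset.sum_le_sum fun j _ => ?_
    split_ifs with hj
    · exact mul_le_mul_of_nonneg_left (pow_le_pow_left₀ hδ₀ (hfar j hj) n) (hq.1 _ _)
    · exact mul_le_of_le_one_right (hq.1 _ _) (pow_le_one₀ hδ₀ hδ₁)
  rw [Finset.sum_ite, Finset.filter_mem_eq_inter, Finset.univ_inter] at hrow
  refine hrow.trans (add_le_add ?_ ?_)
  · have hterm_nonneg : ∀ l, ∀ i ∈ A l, ∀ j ∈ A' l,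
        0 ≤ q i j * |G.atom i - G'.atom j| ^ ((A l).card + (A' l).card - 1) :=
      fun _ _ _ _ _ => mul_nonneg (hq.1 _ _) (pow_nonneg (abs_nonneg _) _)
    calc _ ≤ ∑ i ∈ A l₀, ∑ j ∈ A' l₀, q i j * |G.atom i - G'.atom j| ^ n :=
          Finset.single_le_sum (fun i hi => Finset.sum_nonneg (hterm_nonneg l₀ i hi))
            ((hi₀ l₀).2 rfl)
      _ ≤ _ := Finset.single_le_sum (f := fun l => ∑ i ∈ A l, ∑ j ∈ A' l,
            q i j * |G.atom i - G'.atom j| ^ ((A l).card + (A' l).card - 1))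
          (fun l _ => Finset.sum_nonneg fun i hi => Finset.sum_nonneg (hterm_nonneg l i hi))
          (Finset.mem_univ l₀)
  · have hoff_nonneg : ∀ i j, 0 ≤ if ∃ l, i ∈ A l ∧ j ∈ A' l then 0 else q i j :=
      fun i j => by split_ifs <;> simp [hq.1 i j]
    calc _ = ∑ j with j ∉ A' l₀, if ∃ l, i₀ ∈ A l ∧ j ∈ A' l then 0 else q i₀ j := by
          refine Finset.sum_congr rfl fun j hj => (if_neg ?_).symm
          rintro ⟨l, hl, hjl⟩
          rw [(hi₀ l).1 hl] at hjl
          exact (Finset.mem_filter.1 hj).2 hjl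
      _ ≤ ∑ j, if ∃ l, i₀ ∈ A l ∧ j ∈ A' l then 0 else q i₀ j :=
          Finset.sum_le_sum_of_subset_of_nonneg (Finset.filter_subset _ _)
            fun j _ _ => hoff_nonneg i₀ j
      _ ≤ _ := Finset.single_le_sum (fun i _ => Finset.sum_nonneg fun j _ => hoff_nonneg i j)
          (Finset.mem_univ i₀)

theorem card_eq_of_mem_iff_append_eq {n m : ℕ} {l₀ : Fin n} {s : Finset (Fin (n + m))}
    (hs : ∀ j, j ∈ s ↔ Fin.append id (fun _ => l₀) j = l₀) : s.card = m + 1 := by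
  rw [show s = Finset.univ.filter fun j => Fin.append id (fun _ => l₀) j = l₀ by ext j; simp [hs],
    Finset.card_filter, Fin.sum_univ_add]
  simp [Finset.sum_ite_eq']
  ring

theorem le_Wtilde_moveAtom_splitAtom {Gstar : MixingMeasure ℝ} {γ : ℝ}
    (hsep : Pairwise fun l l' => γ ≤ dist (Gstar.atom l) (Gstar.atom l')) (l₀ : Fin Gstar.order)
    {y : ℝ} (hy : ∀ i, i ≠ l₀ → Gstar.atom i ≠ y) (hyγ : dist y (Gstar.atom l₀) < γ / 2)
    {m : ℕ} {x : Fin m → ℝ} (hx : Function.Injective x) (hxG : ∀ t i, x t ≠ Gstar.atom i)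
    (hxγ : ∀ t, dist (x t) (Gstar.atom l₀) < γ / 2) {δ : ℝ} (hδ₀ : 0 ≤ δ) (hδ₁ : δ ≤ 1)
    (hδy : δ ≤ dist y (Gstar.atom l₀)) (hδx : ∀ t, δ ≤ dist y (x t)) :
    Gstar.p l₀ * δ ^ (m + 1) ≤
      Wtilde Gstar (Gstar.moveAtom l₀ y hy) (Gstar.splitAtom l₀ x hx hxG) := by
  have hγ : 0 < γ / 2 := dist_nonneg.trans_lt hyγ
  have hnear : ∀ i, dist ((Gstar.moveAtom l₀ y hy).atom i) (Gstar.atom i) < γ / 2 :=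
    fun (i : Fin Gstar.order) => by
      by_cases hi : i = l₀
      · simpa [moveAtom, hi] using hyγ
      · simpa [moveAtom, Function.update_apply, hi] using hγ
  have hA : ∀ l, voronoiD absDist (Gstar.moveAtom l₀ y hy) Gstar l = {l} := fun l =>
    Finset.ext fun i => (mem_voronoiD_absDist_iff hsep (G := Gstar.moveAtom l₀ y hy) (c := id)
      hnear i l).trans Finset.mem_singleton.symm
  have hA' := mem_voronoiD_absDist_iff hsep (G := Gstar.splitAtom l₀ x hx hxG)
    (c := Fin.append id fun _ => l₀) (Fin.addCases (fun _ => by simpa [splitAtom] using hγ)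
      (by simpa [splitAtom] using hxγ))
  have hcard : (voronoiD absDist (Gstar.moveAtom l₀ y hy) Gstar l₀).card = 1 := by
    rw [hA]
    rfl
  have hcard' : (voronoiD absDist (Gstar.splitAtom l₀ x hx hxG) Gstar l₀).card = m + 1 :=
    card_eq_of_mem_iff_append_eq fun j => hA' j l₀
  have h := le_Wtilde (G := Gstar.moveAtom l₀ y hy) (G' := Gstar.splitAtom l₀ x hx hxG)
    (i₀ := l₀) (l₀ := l₀) (fun l => by rw [hA]; exact Finset.mem_singleton.trans eq_comm) hδ₀ hδ₁
    fun j hj => by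
    rw [hA'] at hj
    induction j using Fin.addCases with
    | left i =>
      obtain rfl : i = l₀ := by simpa using hj
      simpa [moveAtom, splitAtom, Real.dist_eq] using hδy
    | right t => simpa [moveAtom, splitAtom, Real.dist_eq] using hδx t
  rwa [hcard, hcard', Nat.add_sub_cancel_left] at h

theorem exists_wassersteinPow_le_and_le_Wtilde {Gstar : MixingMeasure ℝ} {n : ℕ} {Θ : Set ℝ}
    (hGstar : Gstar.memE n Θ) {γ : ℝ}
    (hsep : Pairwise fun l l' => γ ≤ dist (Gstar.atom l) (Gstar.atom l')) (l₀ : Fin Gstar.order)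
    (m : ℕ) {ε : ℝ} (hε₀ : 0 < ε) (hε₁ : ε ≤ 1) (hεγ : (m + 1) * ε < γ / 2)
    (hεΘ : Metric.closedBall (Gstar.atom l₀) ((m + 1) * ε) ⊆ Θ) (r : ℕ) :
    ∃ G G' : MixingMeasure ℝ, G.memE n Θ ∧ G'.memE (n + m) Θ ∧ ¬G.MixEq G' ∧
      wassersteinPow absDist r G G' ≤ ((m + 1) * ε) ^ r ∧
      Gstar.p l₀ * ε ^ (m + 1) ≤ Wtilde Gstar G G' := by
  set θ := Gstar.atom l₀
  have hy_dist : dist (θ + ε) θ = ε := by simp [hε₀.le]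
  have hx_dist (t : Fin m) : dist (θ - (t + 1) * ε) θ = (t + 1) * ε := by
    rw [Real.dist_eq, sub_sub_cancel_left, abs_neg, abs_of_pos (by positivity)]
  have hyx_dist (t : Fin m) : dist (θ + ε) (θ - (t + 1) * ε) = (t + 2) * ε := by
    rw [Real.dist_eq, show θ + ε - (θ - (t + 1) * ε) = (t + 2) * ε by ring,
      abs_of_pos (by positivity)]
  have ht (t : Fin m) : (t : ℝ) + 1 ≤ m := by exact_mod_cast t.isLt
  have hy : ∀ i, i ≠ l₀ → Gstar.atom i ≠ θ + ε := fun i =>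
    ne_of_dist_lt_half hsep (by nlinarith [hy_dist])
  have hx : Function.Injective fun t : Fin m => θ - (t + 1) * ε := fun t t' h => by
    have : (t : ℝ) = t' := by simpa [hε₀.ne'] using h
    exact Fin.ext (by exact_mod_cast this)
  have hxG (t : Fin m) (i : Fin Gstar.order) : θ - (t + 1) * ε ≠ Gstar.atom i := by
    rcases eq_or_ne i l₀ with rfl | hi
    · nlinarith [ht t]
    · exact (ne_of_dist_lt_half hsep (by rw [hx_dist]; nlinarith [ht t]) hi).symm
  refine ⟨Gstar.moveAtom l₀ (θ + ε) hy, Gstar.splitAtom l₀ _ hx hxG,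
    memE_moveAtom hGstar l₀ hy (hεΘ ?_), memE_splitAtom hGstar l₀ hx hxG fun t => hεΘ ?_,
    not_mixEq_of_forall_atom_ne (i := l₀) (Fin.addCases (fun i => ?_) fun t => ?_),
    wassersteinPow_moveAtom_splitAtom_le (fun a b => abs_nonneg (a - b)) (by simp)
      Gstar l₀ hy hx hxG (by positivity) ?_ (fun t => ?_) r,
    le_Wtilde_moveAtom_splitAtom hsep l₀ hy ?_ hx hxG (fun t => ?_) hε₀.le hε₁ hy_dist.ge
      fun t => ?_⟩
  · rw [Metric.mem_closedBall, hy_dist]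
    nlinarith
  · rw [Metric.mem_closedBall, hx_dist]
    nlinarith [ht t]
  · rcases eq_or_ne i l₀ with rfl | hi
    · simpa [splitAtom, moveAtom, θ] using hε₀.ne'
    · simpa [splitAtom, moveAtom] using hy i hi
  · simp only [splitAtom, moveAtom, Fin.append_right, Function.update_self]
    nlinarith
  · rw [← Real.dist_eq, hy_dist]
    nlinarith
  · rw [← Real.dist_eq, hyx_dist]
    nlinarith [ht t]
  · rw [hy_dist]
    nlinarith
  · rw [hx_dist]
    nlinarith [ht t]
  · rw [hyx_dist]
    nlinarith

theorem Wtilde_wassersteinPow_ratio_unbounded_general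
    (Θ : Set ℝ)
    (k k0 kstar : ℕ) (hk0 : kstar ≤ k0) (hk : k0 ≤ k)
    (hsum : 2 * kstar < k + k0)
    (Gstar : MixingMeasure ℝ) (hGs : Gstar.memE kstar Θ)
    (hint : ∃ l, Gstar.atom l ∈ interior Θ) :
    ∀ M : ℝ, ∃ (k' : ℕ) (G G' : MixingMeasure ℝ), k' ≤ k ∧
      G.memE k' Θ ∧ G'.memE k0 Θ ∧ ¬G.MixEq G' ∧
      M * wassersteinPow absDist (k + k0 - 2 * kstar + 1) G G' < Wtilde Gstar G G' := by
  intro M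
  obtain ⟨l₀, hl₀⟩ := hint
  obtain ⟨ρ, hρ, hball⟩ := Metric.isOpen_iff.1 isOpen_interior _ hl₀
  obtain ⟨γ, hγ, hsep⟩ := exists_pos_pairwise_le_dist Gstar.atom_inj
  set m := k0 - kstar
  set r := k + k0 - 2 * kstar + 1
  have hsmall : ∀ᶠ ε in 𝓝 (0 : ℝ), ε ≤ 1 ∧ (m + 1) * ε ^ 1 < min (γ / 2) ρ ∧
      max M 0 * (m + 1) ^ r * ε ^ (k - kstar) < Gstar.p l₀ :=
    (eventually_le_nhds one_pos).and <|
      (eventually_mul_pow_lt (lt_min (half_pos hγ) hρ) _ one_ne_zero).and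
        (eventually_mul_pow_lt (Gstar.p_pos l₀) _ (by omega))
  obtain ⟨ε, ⟨hε₁, hε, hεM⟩, hε₀⟩ :=
    ((hsmall.filter_mono nhdsWithin_le_nhds).and (self_mem_nhdsWithin (s := Set.Ioi 0))).exists
  rw [pow_one, lt_min_iff] at hε
  obtain ⟨G, G', hG, hG', hne, hW, hWt⟩ := exists_wassersteinPow_le_and_le_Wtilde hGs hsep l₀ m
    hε₀ hε₁ hε.1 ((Metric.closedBall_subset_ball hε.2).trans (hball.trans interior_subset)) r
  refine ⟨kstar, G, G', by omega, hG, by rwa [show kstar + m = k0 by omega] at hG', hne, ?_⟩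
  calc M * wassersteinPow absDist r G G' ≤ max M 0 * ((m + 1) * ε) ^ r :=
        mul_le_mul (le_max_left _ _) hW (wassersteinPow_nonneg_s13 (fun _ _ => abs_nonneg _) _ _ _)
          (le_max_right _ _)
    _ = max M 0 * (m + 1) ^ r * ε ^ (k - kstar) * ε ^ (m + 1) := by
        rw [mul_pow, ← show ε ^ (k - kstar + (m + 1)) = ε ^ r by congr 1; omega, pow_add]
        ring
    _ < Gstar.p l₀ * ε ^ (m + 1) := by gcongr
    _ ≤ Wtilde Gstar G G' := hWt

/-- equation (12), second part: when `k + k0 > 2k*` and `G*` has an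
atom in the interior of `Θ`, the ratio `W̃(G, G') / W_r^r(G, G')` is unbounded, where
`r = k + k0 - 2k* + 1`. -/
theorem Wtilde_wassersteinPow_ratio_unbounded
    (Θ : Set ℝ) (hΘc : IsCompact Θ) (hΘi : (interior Θ).Nonempty)
    (k k0 kstar : ℕ) (hks : 2 ≤ kstar) (hk0 : kstar ≤ k0) (hk : k0 ≤ k)
    (hsum : 2 * kstar < k + k0)
    (Gstar : MixingMeasure ℝ) (hGs : Gstar.memE kstar Θ)
    (hint : ∃ l, Gstar.atom l ∈ interior Θ) :
    ∀ M : ℝ, ∃ (k' : ℕ) (G G' : MixingMeasure ℝ), k' ≤ k ∧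
      G.memE k' Θ ∧ G'.memE k0 Θ ∧ ¬G.MixEq G' ∧
      M * wassersteinPow absDist (k + k0 - 2 * kstar + 1) G G' < Wtilde Gstar G G' :=
  Wtilde_wassersteinPow_ratio_unbounded_general Θ k k0 kstar hk0 hk hsum Gstar hGs hint
end

section
/- Let Θ ⊆ ℝ^d be a compact set with nonempty interior, let Δ = max(1, diam(Θ)), let k ≥ k0 ≥ 1 and G0 ∈ E_{k0}(Θ). Then for every G ∈ O_k(Θ): D(G, G0) ≥ W_2²(G, G0) / Δ², where W_2 is the order-2 Wasserstein distance with respect to the Euclidean distance. -/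
open MeasureTheory

attribute [local instance] Classical.propDecidable

/-- The loss function `𝒟(G, G0)` of equation (5). -/
noncomputable def lossD {d : ℕ} (G G0 : MixingMeasure (EuclideanSpace ℝ (Fin d))) : ℝ :=
  (∑ j, if 1 < (voronoiD (fun a b => ‖a - b‖) G G0 j).card
    then ∑ i ∈ voronoiD (fun a b => ‖a - b‖) G G0 j, G.p i * ‖G.atom i - G0.atom j‖ ^ 2
    else ∑ i ∈ voronoiD (fun a b => ‖a - b‖) G G0 j, G.p i * ‖G.atom i - G0.atom j‖)
  + ∑ j, |(∑ i ∈ voronoiD (fun a b => ‖a - b‖) G G0 j, G.p i) - G0.p j|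

/-- Lemma B.1(a): the loss `𝒟` dominates `W_2² / Δ²`, where
`Δ = max 1 (diam Θ)`. -/
theorem lossD_ge_wasserstein_sq
    (d : ℕ) (Θ : Set (EuclideanSpace ℝ (Fin d)))
    (hΘc : IsCompact Θ) (hΘi : (interior Θ).Nonempty)
    (k k0 : ℕ) (hk0 : 1 ≤ k0) (hk : k0 ≤ k)
    (G0 : MixingMeasure (EuclideanSpace ℝ (Fin d))) (hG0 : G0.memE k0 Θ) :
    ∀ G : MixingMeasure (EuclideanSpace ℝ (Fin d)), G.memO k Θ →
      wassersteinPow (fun a b => ‖a - b‖) 2 G G0 / max 1 (Metric.diam Θ) ^ 2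
        ≤ lossD G G0 := by
  intro G hG
  classical
  set Δ : ℝ := max 1 (Metric.diam Θ) with hΔdef
  have hΔ1 : (1:ℝ) ≤ Δ := le_max_left _ _
  have hΔ0 : (0:ℝ) < Δ := lt_of_lt_of_le one_pos hΔ1
  have hΔ2 : (1:ℝ) ≤ Δ ^ 2 := by nlinarith
  -- distances
  set df : Fin G.order → Fin G0.order → ℝ := fun i j => ‖G.atom i - G0.atom j‖ with hdf
  have hd0 : ∀ i j, 0 ≤ df i j := fun i j => norm_nonneg _
  have hdΔ : ∀ i j, df i j ≤ Δ := by
    intro i j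
    have h := Metric.dist_le_diam_of_mem hΘc.isBounded (hG.2 i) (hG0.2 j)
    rw [dist_eq_norm] at h
    exact h.trans (le_max_right _ _)
  have hd2 : ∀ i j, df i j ^ 2 ≤ Δ ^ 2 := fun i j => by nlinarith [hd0 i j, hdΔ i j]
  -- positivity of orders
  have hGord : 0 < G.order := by
    rcases Nat.eq_zero_or_pos G.order with h | h
    · exfalso
      have he : IsEmpty (Fin G.order) := by rw [h]; infer_instance
      have hs := G.p_sum
      rw [Finset.univ_eq_empty, Finset.sum_empty] at hs
      norm_num at hs
    · exact h
  have h0ord : 0 < G0.order := hG0.1 ▸ hk0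
  -- nearest-atom assignment
  have hmin : ∀ i : Fin G.order, ∃ j, ∀ l, df i j ≤ df i l := by
    intro i
    obtain ⟨j, -, hj⟩ := Finset.exists_min_image Finset.univ (fun j => df i j)
      ⟨⟨0, h0ord⟩, Finset.mem_univ _⟩
    exact ⟨j, fun l => hj l (Finset.mem_univ l)⟩
  choose φ hφ using hmin
  set A : Fin G0.order → Finset (Fin G.order) :=
    fun j => voronoiD (fun a b => ‖a - b‖) G G0 j with hA
  have hφA : ∀ i, i ∈ A (φ i) := by
    intro i
    simp only [hA, voronoiD, Finset.mem_filter, Finset.mem_univ, true_and]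
    exact hφ i
  set F : Fin G0.order → Finset (Fin G.order) :=
    fun j => Finset.univ.filter (fun i => φ i = j) with hF
  have hFA : ∀ j, F j ⊆ A j := by
    intro j i hi
    simp only [hF, Finset.mem_filter, Finset.mem_univ, true_and] at hi
    exact hi ▸ hφA i
  set n : Fin G0.order → ℝ := fun j => ∑ i ∈ F j, G.p i with hn
  set m : Fin G0.order → ℝ := fun j => ∑ i ∈ A j, G.p i with hm
  have hnm : ∀ j, n j ≤ m j := fun j =>
    Finset.sum_le_sum_of_subset_of_nonneg (hFA j) (fun i _ _ => (G.p_pos i).le)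
  have hn0 : ∀ j, 0 ≤ n j := fun j => Finset.sum_nonneg fun i _ => (G.p_pos i).le
  have hiF : ∀ i, i ∈ F (φ i) := by
    intro i; simp [hF]
  have hnφ : ∀ i, G.p i ≤ n (φ i) := fun i =>
    Finset.single_le_sum (fun i _ => (G.p_pos i).le) (hiF i)
  have hnφpos : ∀ i, 0 < n (φ i) := fun i => lt_of_lt_of_le (G.p_pos i) (hnφ i)
  have hsum_n : ∑ j, n j = 1 := by
    rw [hn, ← G.p_sum]
    exact Finset.sum_fiberwise Finset.univ φ G.p
  set S : ℝ := ∑ j, max (G0.p j - n j) 0 with hS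
  set T : ℝ := ∑ j, max (n j - G0.p j) 0 with hT
  have hS0 : 0 ≤ S := Finset.sum_nonneg fun j _ => le_max_right _ _
  have hTS : T = S := by
    have h1 : S - T = ∑ j, (G0.p j - n j) := by
      rw [hS, hT, ← Finset.sum_sub_distrib]
      refine Finset.sum_congr rfl fun j _ => ?_
      have h : -(G0.p j - n j) = n j - G0.p j := by ring
      rw [← h, max_zero_sub_max_neg_zero_eq_self]
    have h2 : ∑ j, (G0.p j - n j) = 0 := by
      rw [Finset.sum_sub_distrib, G0.p_sum, hsum_n]; ring
    linarith [h1, h2]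
  -- the coupling
  set q : Fin G.order → Fin G0.order → ℝ := fun i j =>
    (if φ i = j then G.p i * (min (n j) (G0.p j) / n j) else 0)
    + (G.p i * (max (n (φ i) - G0.p (φ i)) 0 / n (φ i))) * (max (G0.p j - n j) 0 / S)
    with hq
  have hq0 : ∀ i j, 0 ≤ q i j := by
    intro i j
    have h1 : (0:ℝ) ≤ if φ i = j then G.p i * (min (n j) (G0.p j) / n j) else 0 := by
      split
      · exact mul_nonneg (G.p_pos i).le (div_nonneg (le_min (hn0 j) (G0.p_pos j).le) (hn0 j))
      · exact le_refl 0
    have h2 : (0:ℝ) ≤ (G.p i * (max (n (φ i) - G0.p (φ i)) 0 / n (φ i)))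
        * (max (G0.p j - n j) 0 / S) :=
      mul_nonneg (mul_nonneg (G.p_pos i).le (div_nonneg (le_max_right _ _) (hn0 _)))
        (div_nonneg (le_max_right _ _) hS0)
    simpa [hq] using add_nonneg h1 h2
  -- key min/max identity
  have key1 : ∀ a b : ℝ, min a b + max (a - b) 0 = a := by
    intro a b
    rcases le_total a b with h | h
    · rw [min_eq_left h, max_eq_right (by linarith)]; ring
    · rw [min_eq_right h, max_eq_left (by linarith)]; ring
  -- the degenerate case S = 0
  have hScases : S = 0 → ∀ j, n j = G0.p j := by
    intro h0 j
    have h0' : ∑ x, max (G0.p x - n x) 0 = 0 := by rw [← hS]; exact h0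
    have hT0' : ∑ x, max (n x - G0.p x) 0 = 0 := by rw [← hT]; exact hTS.trans h0
    have h1 := (Finset.sum_eq_zero_iff_of_nonneg
      (fun x _ => le_max_right (G0.p x - n x) 0)).1 h0' j (Finset.mem_univ j)
    have h2 := (Finset.sum_eq_zero_iff_of_nonneg
      (fun x _ => le_max_right (n x - G0.p x) 0)).1 hT0' j (Finset.mem_univ j)
    have h3 : G0.p j - n j ≤ 0 := by
      by_contra hc; push_neg at hc; rw [max_eq_left hc.le] at h1; linarith
    have h4 : n j - G0.p j ≤ 0 := by
      by_contra hc; push_neg at hc; rw [max_eq_left hc.le] at h2; linarith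
    linarith
  -- row sums
  have hrow : ∀ i, ∑ j, q i j = G.p i := by
    intro i
    have e1 : ∑ j, (if φ i = j then G.p i * (min (n j) (G0.p j) / n j) else 0)
        = G.p i * (min (n (φ i)) (G0.p (φ i)) / n (φ i)) := by
      rw [Finset.sum_ite_eq]; simp
    have e2 : ∑ j, (G.p i * (max (n (φ i) - G0.p (φ i)) 0 / n (φ i)))
        * (max (G0.p j - n j) 0 / S)
        = (G.p i * (max (n (φ i) - G0.p (φ i)) 0 / n (φ i))) * (S / S) := by
      rw [← Finset.mul_sum, ← Finset.sum_div]
    rw [show ∑ j, q i j = ∑ j, ((if φ i = j then G.p i * (min (n j) (G0.p j) / n j) else 0)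
      + (G.p i * (max (n (φ i) - G0.p (φ i)) 0 / n (φ i))) * (max (G0.p j - n j) 0 / S))
      from rfl]
    rw [Finset.sum_add_distrib, e1, e2]
    rcases eq_or_ne S 0 with h0 | h0
    · have hnp := hScases h0 (φ i)
      rw [h0, div_zero, mul_zero, add_zero, hnp, min_self,
        div_self (by rw [← hnp]; exact (hnφpos i).ne')]
      ring
    · rw [div_self h0, mul_one, ← mul_add, ← add_div, key1,
        div_self (hnφpos i).ne', mul_one]
  -- fibered sums over the assignment
  have hfiber : ∀ f : Fin G.order → ℝ,
      ∑ i, f i = ∑ j, ∑ i ∈ F j, f i :=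
    fun f => (Finset.sum_fiberwise Finset.univ φ f).symm
  have hcol_aux : ∀ c : Fin G0.order → ℝ,
      ∑ i, G.p i * c (φ i) = ∑ j, n j * c j := by
    intro c
    rw [hfiber (fun i => G.p i * c (φ i))]
    refine Finset.sum_congr rfl fun j _ => ?_
    rw [hn, Finset.sum_mul]
    refine Finset.sum_congr rfl fun i hi => ?_
    simp only [hF, Finset.mem_filter] at hi
    rw [hi.2]
  have hT_eq : ∑ i, G.p i * (max (n (φ i) - G0.p (φ i)) 0 / n (φ i)) = S := by
    rw [hcol_aux (fun j => max (n j - G0.p j) 0 / n j), ← hTS, hT]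
    refine Finset.sum_congr rfl fun j _ => ?_
    rcases eq_or_ne (n j) 0 with h0 | h0
    · have hz : max (n j - G0.p j) 0 = 0 := by
        rw [h0]; exact max_eq_right (by linarith [G0.p_pos j])
      rw [hz, h0]; ring
    · field_simp
  -- column sums
  have hcol : ∀ j, ∑ i, q i j = G0.p j := by
    intro j
    have e1 : ∑ i, (if φ i = j then G.p i * (min (n j) (G0.p j) / n j) else 0)
        = min (n j) (G0.p j) := by
      rw [← Finset.sum_filter]
      rw [show (Finset.univ.filter fun i => φ i = j) = F j from rfl]
      rw [← Finset.sum_mul]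
      rw [show (∑ i ∈ F j, G.p i) = n j from rfl]
      rcases eq_or_ne (n j) 0 with h0 | h0
      · rw [h0, min_eq_left (G0.p_pos j).le]; ring
      · rw [mul_comm, div_mul_cancel₀ _ h0]
    have e2 : ∑ i, (G.p i * (max (n (φ i) - G0.p (φ i)) 0 / n (φ i)))
        * (max (G0.p j - n j) 0 / S)
        = S * (max (G0.p j - n j) 0 / S) := by
      rw [← Finset.sum_mul, hT_eq]
    rw [show ∑ i, q i j = ∑ i, ((if φ i = j then G.p i * (min (n j) (G0.p j) / n j) else 0)
      + (G.p i * (max (n (φ i) - G0.p (φ i)) 0 / n (φ i))) * (max (G0.p j - n j) 0 / S))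
      from rfl]
    rw [Finset.sum_add_distrib, e1, e2]
    rcases eq_or_ne S 0 with h0 | h0
    · have hnp := hScases h0 j
      rw [h0, div_zero, mul_zero, add_zero, hnp, min_self]
    · rw [mul_div_assoc', mul_comm, mul_div_assoc, div_self h0, mul_one, min_comm, key1]
  -- cost bound
  have hL1 : ∑ i, G.p i * df i (φ i) ^ 2
      ≤ Δ ^ 2 * ∑ j, (if 1 < (A j).card
        then ∑ i ∈ A j, G.p i * df i j ^ 2
        else ∑ i ∈ A j, G.p i * df i j) := by
    rw [hfiber (fun i => G.p i * df i (φ i) ^ 2), Finset.mul_sum]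
    refine Finset.sum_le_sum fun j _ => ?_
    have hFj : ∑ i ∈ F j, G.p i * df i (φ i) ^ 2 = ∑ i ∈ F j, G.p i * df i j ^ 2 := by
      refine Finset.sum_congr rfl fun i hi => ?_
      simp only [hF, Finset.mem_filter] at hi
      rw [hi.2]
    rw [hFj]
    split
    · calc ∑ i ∈ F j, G.p i * df i j ^ 2
          ≤ ∑ i ∈ A j, G.p i * df i j ^ 2 :=
            Finset.sum_le_sum_of_subset_of_nonneg (hFA j)
              (fun i _ _ => mul_nonneg (G.p_pos i).le (by positivity))
        _ ≤ Δ ^ 2 * ∑ i ∈ A j, G.p i * df i j ^ 2 := by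
            refine le_mul_of_one_le_left ?_ hΔ2
            exact Finset.sum_nonneg fun i _ => mul_nonneg (G.p_pos i).le (by positivity)
    · calc ∑ i ∈ F j, G.p i * df i j ^ 2
          ≤ ∑ i ∈ A j, G.p i * df i j ^ 2 :=
            Finset.sum_le_sum_of_subset_of_nonneg (hFA j)
              (fun i _ _ => mul_nonneg (G.p_pos i).le (by positivity))
        _ ≤ ∑ i ∈ A j, Δ ^ 2 * (G.p i * df i j) := by
            refine Finset.sum_le_sum fun i _ => ?_
            have hpd : (0:ℝ) ≤ G.p i * df i j := mul_nonneg (G.p_pos i).le (hd0 i j)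
            have hΔΔ : Δ ≤ Δ ^ 2 := by nlinarith [hΔ1, hΔ0.le]
            calc G.p i * df i j ^ 2 = (G.p i * df i j) * df i j := by ring
              _ ≤ (G.p i * df i j) * Δ := mul_le_mul_of_nonneg_left (hdΔ i j) hpd
              _ ≤ (G.p i * df i j) * Δ ^ 2 := mul_le_mul_of_nonneg_left hΔΔ hpd
              _ = Δ ^ 2 * (G.p i * df i j) := by ring
        _ = Δ ^ 2 * ∑ i ∈ A j, G.p i * df i j := (Finset.mul_sum _ _ _).symm
  have hSL2 : S ≤ ∑ j, |m j - G0.p j| := by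
    rw [← hTS, hT]
    refine Finset.sum_le_sum fun j _ => ?_
    have h1 : n j - G0.p j ≤ m j - G0.p j := by linarith [hnm j]
    exact max_le (h1.trans (le_abs_self _)) (abs_nonneg _)
  -- total cost
  have hcost : ∑ i, ∑ j, q i j * df i j ^ 2 ≤ Δ ^ 2 * lossD G G0 := by
    have hsplit : ∑ i, ∑ j, q i j * df i j ^ 2
        = (∑ i, ∑ j, (if φ i = j then G.p i * (min (n j) (G0.p j) / n j) else 0) * df i j ^ 2)
        + ∑ i, ∑ j, (G.p i * (max (n (φ i) - G0.p (φ i)) 0 / n (φ i)))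
            * (max (G0.p j - n j) 0 / S) * df i j ^ 2 := by
      rw [← Finset.sum_add_distrib]
      refine Finset.sum_congr rfl fun i _ => ?_
      rw [← Finset.sum_add_distrib]
      refine Finset.sum_congr rfl fun j _ => ?_
      rw [show q i j = (if φ i = j then G.p i * (min (n j) (G0.p j) / n j) else 0)
        + (G.p i * (max (n (φ i) - G0.p (φ i)) 0 / n (φ i))) * (max (G0.p j - n j) 0 / S)
        from rfl]
      ring
    have hpart1 : (∑ i, ∑ j, (if φ i = j then G.p i * (min (n j) (G0.p j) / n j) else 0)
        * df i j ^ 2) ≤ ∑ i, G.p i * df i (φ i) ^ 2 := by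
      refine Finset.sum_le_sum fun i _ => ?_
      have e : ∑ j, (if φ i = j then G.p i * (min (n j) (G0.p j) / n j) else 0) * df i j ^ 2
          = G.p i * (min (n (φ i)) (G0.p (φ i)) / n (φ i)) * df i (φ i) ^ 2 := by
        rw [show (fun j => (if φ i = j then G.p i * (min (n j) (G0.p j) / n j) else 0)
          * df i j ^ 2) = (fun j => if φ i = j
            then G.p i * (min (n j) (G0.p j) / n j) * df i j ^ 2 else 0) from by
          funext j; split <;> simp]
        rw [Finset.sum_ite_eq]; simp
      rw [e]
      have hle : min (n (φ i)) (G0.p (φ i)) / n (φ i) ≤ 1 :=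
        div_le_one_of_le₀ (min_le_left _ _) (hn0 _)
      have h1 : (0:ℝ) ≤ df i (φ i) ^ 2 := by positivity
      have h2 : G.p i * (min (n (φ i)) (G0.p (φ i)) / n (φ i)) ≤ G.p i * 1 :=
        mul_le_mul_of_nonneg_left hle (G.p_pos i).le
      calc G.p i * (min (n (φ i)) (G0.p (φ i)) / n (φ i)) * df i (φ i) ^ 2
          ≤ G.p i * 1 * df i (φ i) ^ 2 := mul_le_mul_of_nonneg_right h2 h1
        _ = G.p i * df i (φ i) ^ 2 := by ring
    have hpart2 : (∑ i, ∑ j, (G.p i * (max (n (φ i) - G0.p (φ i)) 0 / n (φ i)))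
        * (max (G0.p j - n j) 0 / S) * df i j ^ 2) ≤ Δ ^ 2 * S := by
      have step1 : (∑ i, ∑ j, (G.p i * (max (n (φ i) - G0.p (φ i)) 0 / n (φ i)))
          * (max (G0.p j - n j) 0 / S) * df i j ^ 2)
          ≤ ∑ i, ∑ j, (G.p i * (max (n (φ i) - G0.p (φ i)) 0 / n (φ i)))
            * (max (G0.p j - n j) 0 / S) * Δ ^ 2 := by
        refine Finset.sum_le_sum fun i _ => Finset.sum_le_sum fun j _ => ?_
        have hc : (0:ℝ) ≤ (G.p i * (max (n (φ i) - G0.p (φ i)) 0 / n (φ i)))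
            * (max (G0.p j - n j) 0 / S) :=
          mul_nonneg (mul_nonneg (G.p_pos i).le (div_nonneg (le_max_right _ _) (hn0 _)))
            (div_nonneg (le_max_right _ _) hS0)
        exact mul_le_mul_of_nonneg_left (hd2 i j) hc
      have step2 : (∑ i, ∑ j, (G.p i * (max (n (φ i) - G0.p (φ i)) 0 / n (φ i)))
          * (max (G0.p j - n j) 0 / S) * Δ ^ 2) = S * (S / S) * Δ ^ 2 := by
        have e : ∀ i : Fin G.order, ∑ j, (G.p i * (max (n (φ i) - G0.p (φ i)) 0 / n (φ i)))
            * (max (G0.p j - n j) 0 / S) * Δ ^ 2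
            = (G.p i * (max (n (φ i) - G0.p (φ i)) 0 / n (φ i))) * ((S / S) * Δ ^ 2) := by
          intro i
          rw [show (fun j => (G.p i * (max (n (φ i) - G0.p (φ i)) 0 / n (φ i)))
            * (max (G0.p j - n j) 0 / S) * Δ ^ 2)
            = (fun j => (G.p i * (max (n (φ i) - G0.p (φ i)) 0 / n (φ i)))
              * ((max (G0.p j - n j) 0 / S) * Δ ^ 2)) from by funext j; ring]
          rw [← Finset.mul_sum]
          congr 1
          rw [← Finset.sum_mul, ← Finset.sum_div]
        calc (∑ i, ∑ j, (G.p i * (max (n (φ i) - G0.p (φ i)) 0 / n (φ i)))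
              * (max (G0.p j - n j) 0 / S) * Δ ^ 2)
            = ∑ i, (G.p i * (max (n (φ i) - G0.p (φ i)) 0 / n (φ i))) * ((S / S) * Δ ^ 2) :=
              Finset.sum_congr rfl fun i _ => e i
          _ = (∑ i, G.p i * (max (n (φ i) - G0.p (φ i)) 0 / n (φ i))) * ((S / S) * Δ ^ 2) :=
              (Finset.sum_mul _ _ _).symm
          _ = S * (S / S) * Δ ^ 2 := by rw [hT_eq]; ring
      have step3 : S * (S / S) * Δ ^ 2 ≤ Δ ^ 2 * S := by
        rcases eq_or_ne S 0 with h0 | h0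
        · rw [h0]; simp
        · rw [div_self h0]; nlinarith
      exact step1.trans (step2.le.trans step3)
    have hL2 : Δ ^ 2 * S ≤ Δ ^ 2 * ∑ j, |m j - G0.p j| :=
      mul_le_mul_of_nonneg_left hSL2 (by positivity)
    have : lossD G G0 = (∑ j, (if 1 < (A j).card
        then ∑ i ∈ A j, G.p i * df i j ^ 2
        else ∑ i ∈ A j, G.p i * df i j)) + ∑ j, |m j - G0.p j| := rfl
    rw [this, hsplit, mul_add]
    have hfirst := hpart1.trans hL1
    have hsecond := hpart2.trans hL2
    exact add_le_add hfirst hsecond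
  -- Wasserstein ≤ cost of our coupling
  have hW : wassersteinPow (fun a b => ‖a - b‖) 2 G G0 ≤ ∑ i, ∑ j, q i j * df i j ^ 2 := by
    apply csInf_le
    · refine ⟨0, fun c hc => ?_⟩
      obtain ⟨q', hq', rfl⟩ := hc
      exact Finset.sum_nonneg fun i _ => Finset.sum_nonneg fun j _ =>
        mul_nonneg (hq'.1 i j) (by positivity)
    · exact ⟨q, ⟨hq0, hrow, hcol⟩, rfl⟩
  have hD2 : (0:ℝ) < Δ ^ 2 := by positivity
  rw [div_le_iff₀ hD2]
  calc wassersteinPow (fun a b => ‖a - b‖) 2 G G0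
      ≤ ∑ i, ∑ j, q i j * df i j ^ 2 := hW
    _ ≤ Δ ^ 2 * lossD G G0 := hcost
    _ = lossD G G0 * Δ ^ 2 := mul_comm _ _
end
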